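/- arXiv:2212.03819 — 8 statements merged into one kernel-verified Lean document; each statement's English description precedes it below -/
import Mathlib

section
/- Let r ≥ 1 and let f ∈ ℤ^r be an integer vector such that the sum of its positive entries is at most k and the sum of the absolute values of its negative entries is at most k, for a positive integer k. Then f is an integer linear combination of at most k vectors, each of which is either a standard unit vector e_i or a difference e_i − e_j of two standard unit vectors. -/
private lemma single_inj (r : ℕ) :
    Function.Injective (fun i : Fin r => (Pi.single i 1 : Fin r → ℤ)) := by
  intro a b h
  have h1 := congrFun h a
  simp only [Pi.single_apply, if_pos rfl] at h1
  by_contra hab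
  rw [if_neg hab] at h1
  exact one_ne_zero h1

/-- Decomposition into unit vectors with support control. -/
private lemma single_decomp (r : ℕ) (f : Fin r → ℤ) :
    ∃ (s : Finset (Fin r → ℤ)) (c : (Fin r → ℤ) → ℤ),
      s.card = (Finset.univ.filter (fun i => f i ≠ 0)).card ∧
      (∀ v ∈ s, ∃ i : Fin r, v = Pi.single i 1) ∧
      (∀ v ∈ s, ∀ l, v l ≠ 0 → f l ≠ 0) ∧
      f = ∑ v ∈ s, c v • v := by
  classical
  refine ⟨(Finset.univ.filter fun i => f i ≠ 0).image (fun i => (Pi.single i 1 : Fin r → ℤ)),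
    fun v => ∑ l, v l * f l, ?_, ?_, ?_, ?_⟩
  · exact Finset.card_image_of_injective _ (single_inj r)
  · intro v hv
    obtain ⟨i, _, rfl⟩ := Finset.mem_image.1 hv
    exact ⟨i, rfl⟩
  · intro v hv l hl
    obtain ⟨i, hi, rfl⟩ := Finset.mem_image.1 hv
    have : l = i := by
      by_contra h
      exact hl (by simp [Pi.single_apply, h])
    subst this
    exact (Finset.mem_filter.1 hi).2
  · rw [Finset.sum_image (fun a _ b _ h => single_inj r h)]
    have hc : ∀ i : Fin r, (∑ l, (Pi.single i 1 : Fin r → ℤ) l * f l) = f i := by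
      intro i; simp [Pi.single_apply, ite_mul]
    have : ∀ i : Fin r, (∑ l, (Pi.single i 1 : Fin r → ℤ) l * f l) • (Pi.single i 1 : Fin r → ℤ)
        = Pi.single i (f i) := by
      intro i
      rw [hc i]
      funext l
      simp [Pi.single_apply]
    rw [Finset.sum_congr rfl (fun i _ => this i)]
    rw [Finset.sum_filter_of_ne (by intro i _ h hi; exact h (by simp [hi]))]
    exact (Finset.univ_sum_single f).symm

private lemma aux_decomp (r : ℕ) : ∀ (N : ℕ) (f : Fin r → ℤ),
    (∑ i, max (f i) 0) + (∑ i, max (-(f i)) 0) ≤ (N : ℤ) →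
    ∃ (s : Finset (Fin r → ℤ)) (c : (Fin r → ℤ) → ℤ),
      (s.card : ℤ) ≤ max (∑ i, max (f i) 0) (∑ i, max (-(f i)) 0) ∧
      (∀ v ∈ s, (∃ i : Fin r, v = Pi.single i 1) ∨
        (∃ i j : Fin r, i ≠ j ∧ v = Pi.single i 1 - Pi.single j 1)) ∧
      (∀ v ∈ s, ∀ l, v l ≠ 0 → f l ≠ 0) ∧
      f = ∑ v ∈ s, c v • v := by
  classical
  intro N
  induction N with
  | zero =>
    intro f hN
    -- both sums are nonneg, so both are 0, so f = 0
    have hp : (0:ℤ) ≤ ∑ i, max (f i) 0 := Finset.sum_nonneg (fun i _ => le_max_right _ _)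
    have hn : (0:ℤ) ≤ ∑ i, max (-(f i)) 0 := Finset.sum_nonneg (fun i _ => le_max_right _ _)
    have hf : f = 0 := by
      funext l
      have h1 : ∑ i, max (f i) 0 = 0 := le_antisymm (by omega) hp
      have h2 : ∑ i, max (-(f i)) 0 = 0 := le_antisymm (by omega) hn
      have e1 : max (f l) 0 = 0 :=
        (Finset.sum_eq_zero_iff_of_nonneg (fun i _ => le_max_right _ _)).1 h1 l (Finset.mem_univ l)
      have e2 : max (-(f l)) 0 = 0 :=
        (Finset.sum_eq_zero_iff_of_nonneg (fun i _ => le_max_right _ _)).1 h2 l (Finset.mem_univ l)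
      simp only [Pi.zero_apply]
      omega
    exact ⟨∅, fun _ => 0, by simp [le_max_iff, hp], by simp, by simp, by simp [hf]⟩
  | succ N ih =>
    intro f hN
    by_cases hpos : ∃ i, 0 < f i
    · by_cases hneg : ∃ j, f j < 0
      · -- step case
        obtain ⟨i, hi⟩ := hpos
        obtain ⟨j, hj⟩ := hneg
        have hij : i ≠ j := by intro h; rw [h] at hi; omega
        set v0 : Fin r → ℤ := Pi.single i 1 - Pi.single j 1 with hv0
        have hv0i : v0 i = 1 := by simp [hv0, Pi.single_apply, hij, Ne.symm hij]
        have hv0j : v0 j = -1 := by simp [hv0, Pi.single_apply, hij, Ne.symm hij]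
        have hv0l : ∀ l, l ≠ i → l ≠ j → v0 l = 0 := by
          intro l h1 h2; simp [hv0, Pi.single_apply, h1, h2]
        set c0 : ℤ := min (f i) (-(f j)) with hc0
        have hc0pos : 1 ≤ c0 := by simp [hc0]; omega
        set f' : Fin r → ℤ := f - c0 • v0 with hf'
        have hf'i : f' i = f i - c0 := by simp [hf', hv0i]
        have hf'j : f' j = f j + c0 := by simp [hf', hv0j]
        have hf'l : ∀ l, l ≠ i → l ≠ j → f' l = f l := by
          intro l h1 h2; simp [hf', hv0l l h1 h2]
        -- positive sum drops by c0
        have hpos' : (∑ l, max (f' l) 0) = (∑ l, max (f l) 0) - c0 := by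
          have key : (∑ l, (max (f l) 0 - max (f' l) 0)) = c0 := by
            rw [Finset.sum_eq_single_of_mem i (Finset.mem_univ i)]
            · rw [hf'i]; omega
            · intro b _ hb
              by_cases hbj : b = j
              · subst hbj; rw [hf'j]; omega
              · rw [hf'l b hb hbj]; omega
          rw [Finset.sum_sub_distrib] at key
          omega
        have hneg' : (∑ l, max (-(f' l)) 0) = (∑ l, max (-(f l)) 0) - c0 := by
          have key : (∑ l, (max (-(f l)) 0 - max (-(f' l)) 0)) = c0 := by
            rw [Finset.sum_eq_single_of_mem j (Finset.mem_univ j)]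
            · rw [hf'j]; omega
            · intro b _ hb
              by_cases hbi : b = i
              · subst hbi; rw [hf'i]; omega
              · rw [hf'l b hbi hb]; omega
          rw [Finset.sum_sub_distrib] at key
          omega
        obtain ⟨s', c', hcard', hkind', hsupp', hsum'⟩ := ih f' (by
          rw [hpos', hneg']; omega)
        have hzero : f' i = 0 ∨ f' j = 0 := by
          rw [hf'i, hf'j, hc0]; omega
        have hv0notmem : v0 ∉ s' := by
          intro hmem
          have h1 : f' i ≠ 0 := hsupp' v0 hmem i (by rw [hv0i]; norm_num)
          have h2 : f' j ≠ 0 := hsupp' v0 hmem j (by rw [hv0j]; norm_num)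
          tauto
        refine ⟨insert v0 s', fun v => if v = v0 then c0 else c' v, ?_, ?_, ?_, ?_⟩
        · have : (insert v0 s').card ≤ s'.card + 1 := Finset.card_insert_le _ _
          have h2 : ((s'.card : ℤ) + 1) ≤ max (∑ l, max (f l) 0) (∑ l, max (-(f l)) 0) := by
            rw [hpos', hneg'] at hcard'
            rcases le_max_iff.1 hcard' with h | h
            · exact le_max_iff.2 (Or.inl (by omega))
            · exact le_max_iff.2 (Or.inr (by omega))
          calc ((insert v0 s').card : ℤ) ≤ (s'.card : ℤ) + 1 := by exact_mod_cast this
            _ ≤ _ := h2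
        · intro v hv
          rcases Finset.mem_insert.1 hv with rfl | hv
          · exact Or.inr ⟨i, j, hij, rfl⟩
          · exact hkind' v hv
        · intro v hv l hl
          rcases Finset.mem_insert.1 hv with rfl | hv
          · by_cases h1 : l = i
            · subst h1; omega
            · by_cases h2 : l = j
              · subst h2; omega
              · exact absurd (hv0l l h1 h2) hl
          · have := hsupp' v hv l hl
            by_cases h1 : l = i
            · subst h1; omega
            · by_cases h2 : l = j
              · subst h2; omega
              · rwa [hf'l l h1 h2] at this
        · rw [Finset.sum_insert hv0notmem]
          simp only
          simp only [if_true]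
          have : ∑ v ∈ s', (if v = v0 then c0 else c' v) • v = ∑ v ∈ s', c' v • v := by
            refine Finset.sum_congr rfl (fun v hv => ?_)
            rw [if_neg (by rintro rfl; exact hv0notmem hv)]
          rw [this, ← hsum', hf']
          abel
      · -- all entries nonneg
        push_neg at hneg
        obtain ⟨s, c, hcard, hkind, hsupp, hsum⟩ := single_decomp r f
        refine ⟨s, c, ?_, fun v hv => Or.inl (hkind v hv), hsupp, hsum⟩
        have hle : ((Finset.univ.filter (fun l => f l ≠ 0)).card : ℤ) ≤ ∑ l, max (f l) 0 := by
          calc ((Finset.univ.filter (fun l => f l ≠ 0)).card : ℤ)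
              = ∑ l ∈ Finset.univ.filter (fun l => f l ≠ 0), (1:ℤ) := by simp
            _ ≤ ∑ l ∈ Finset.univ.filter (fun l => f l ≠ 0), max (f l) 0 := by
                refine Finset.sum_le_sum (fun l hl => ?_)
                have h1 := (Finset.mem_filter.1 hl).2
                have h2 := hneg l
                omega
            _ ≤ ∑ l, max (f l) 0 := by
                refine Finset.sum_le_sum_of_subset_of_nonneg (Finset.filter_subset _ _)
                  (fun l _ _ => le_max_right _ _)
        rw [hcard]
        exact le_max_iff.2 (Or.inl hle)
    · -- all entries nonpos
      push_neg at hpos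
      obtain ⟨s, c, hcard, hkind, hsupp, hsum⟩ := single_decomp r f
      refine ⟨s, c, ?_, fun v hv => Or.inl (hkind v hv), hsupp, hsum⟩
      have hle : ((Finset.univ.filter (fun l => f l ≠ 0)).card : ℤ) ≤ ∑ l, max (-(f l)) 0 := by
        calc ((Finset.univ.filter (fun l => f l ≠ 0)).card : ℤ)
            = ∑ l ∈ Finset.univ.filter (fun l => f l ≠ 0), (1:ℤ) := by simp
          _ ≤ ∑ l ∈ Finset.univ.filter (fun l => f l ≠ 0), max (-(f l)) 0 := by
              refine Finset.sum_le_sum (fun l hl => ?_)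
              have h1 := (Finset.mem_filter.1 hl).2
              have h2 := hpos l
              omega
          _ ≤ ∑ l, max (-(f l)) 0 := by
              refine Finset.sum_le_sum_of_subset_of_nonneg (Finset.filter_subset _ _)
                (fun l _ _ => le_max_right _ _)
      rw [hcard]
      exact le_max_iff.2 (Or.inr hle)

/-- If the positive entries of `f ∈ ℤ^r` sum to at most `k` and the absolute values of its
negative entries sum to at most `k`, then `f` is an integer linear combination of at most `k`
vectors, each a standard unit vector `e i` or a difference `e i - e j`. -/
theorem span_by_few_unit_and_difference_vectors (r : ℕ) (hr : 1 ≤ r) (k : ℕ) (hk : 1 ≤ k)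
    (f : Fin r → ℤ)
    (hpos : ∑ i, max (f i) 0 ≤ (k : ℤ))
    (hneg : ∑ i, max (-(f i)) 0 ≤ (k : ℤ)) :
    ∃ (s : Finset (Fin r → ℤ)) (c : (Fin r → ℤ) → ℤ),
      s.card ≤ k ∧
      (∀ v ∈ s, (∃ i : Fin r, v = Pi.single i 1) ∨
        (∃ i j : Fin r, i ≠ j ∧ v = Pi.single i 1 - Pi.single j 1)) ∧
      f = ∑ v ∈ s, c v • v := by
  obtain ⟨s, c, hcard, hkind, _, hsum⟩ := aux_decomp r (2 * k) f (by push_cast; omega)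
  refine ⟨s, c, ?_, hkind, hsum⟩
  have : (s.card : ℤ) ≤ (k : ℤ) := le_trans hcard (max_le hpos hneg)
  exact_mod_cast this
end

section
/- For every positive integer Δ, the r×(2r+2) integer matrix [ [1, 0ᵀ, 1ᵀ, Δ−1, Δ]; [0, I_{2Δ−1}, I_{2Δ−1}, 1, 1] ] with r = 2Δ (first row has entries 1, then 2Δ−1 zeros, then 2Δ−1 ones, then Δ−1 and Δ; remaining rows consist of the zero column, two copies of the identity I_{2Δ−1}, and two all-ones columns) is Δ-modular, i.e., every (2Δ)×(2Δ) submatrix has determinant of absolute value at most Δ. -/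
/-- The rank-`2Δ` spike representation: the `2Δ × (4Δ+1)` matrix whose columns are the tip
`(1, 0)`, the columns `(0, eᵢ)` and `(1, eᵢ)` for `i = 1, …, 2Δ−1`, and the two columns
`(Δ−1, 1)` and `(Δ, 1)`. -/
def spikeMatrix (Δ : ℕ) : Matrix (Fin (2 * Δ)) (Fin (4 * Δ + 1)) ℤ :=
  Matrix.of fun i j =>
    if j.val = 0 then (if i.val = 0 then 1 else 0)
    else if j.val ≤ 2 * Δ - 1 then (if i.val = j.val then 1 else 0)
    else if j.val ≤ 4 * Δ - 2 then
      (if i.val = 0 then 1 else if i.val = j.val - (2 * Δ - 1) then 1 else 0)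
    else if j.val = 4 * Δ - 1 then (if i.val = 0 then (Δ : ℤ) - 1 else 1)
    else (if i.val = 0 then (Δ : ℤ) else 1)

open Matrix Finset

set_option linter.unnecessarySeqFocus false


lemma abs_prod_le' {n : ℕ} (x : Fin n → ℤ) (k0 : Fin n) (C : ℤ) (hC : 1 ≤ C)
    (h0 : |x k0| ≤ C) (h1 : ∀ k, k ≠ k0 → |x k| ≤ 1) : |∏ k, x k| ≤ C := by
  rw [Finset.abs_prod, ← Finset.mul_prod_erase Finset.univ _ (Finset.mem_univ k0)]
  have h2 : ∏ k ∈ Finset.univ.erase k0, |x k| ≤ 1 :=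
    Finset.prod_le_one (fun k _ => abs_nonneg _) (fun k hk => h1 k (Finset.ne_of_mem_erase hk))
  have h3 : (0:ℤ) ≤ ∏ k ∈ Finset.univ.erase k0, |x k| :=
    Finset.prod_nonneg (fun k _ => abs_nonneg _)
  calc |x k0| * ∏ k ∈ Finset.univ.erase k0, |x k| ≤ C * 1 :=
        mul_le_mul h0 h2 h3 (by linarith [abs_nonneg (x k0)])
    _ = C := mul_one C

lemma key {n : ℕ} [NeZero n] (F : Matrix (Fin n) (Fin n) ℤ) (r : Fin n → Fin n)
    (hr : Function.Injective r) (j2 jw : Fin n) (C : ℤ) (hC : 1 ≤ C)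
    (hj2 : r j2 = 0)
    (hcol : ∀ i : Fin n, i ≠ 0 → F i j2 = 0)
    (hind : ∀ (i j : Fin n), i ≠ 0 → j ≠ j2 → j ≠ jw → F i j = if r j = i then 1 else 0)
    (hw : jw ≠ j2 → |F (r jw) jw| ≤ 1)
    (htop : |F 0 j2| ≤ C) : |F.det| ≤ C := by
  classical
  have hn : 1 ≤ n := Nat.one_le_iff_ne_zero.mpr (NeZero.ne n)
  set last : Fin n := ⟨n-1, by omega⟩ with hlast
  set pos : Equiv.Perm (Fin n) :=
    if _h : jw = j2 then Equiv.swap j2 0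
    else (Equiv.swap j2 0).trans (Equiv.swap ((Equiv.swap j2 0) jw) last) with hposdef
  have hjw'ne : jw ≠ j2 → ((Equiv.swap j2 0) jw) ≠ 0 := by
    intro h hc
    exact h ((Equiv.swap j2 0).injective (a₁ := jw) (a₂ := j2)
      (by rw [hc, Equiv.swap_apply_left]))
  have hlastne : jw ≠ j2 → (0 : Fin n) ≠ last := by
    intro h hc
    have h2 : 2 ≤ n := by
      have := jw.isLt; have := j2.isLt
      rcases Nat.lt_or_ge n 2 with hn2 | hn2
      · exfalso; apply h; apply Fin.ext; omega
      · exact hn2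
    have : (0 : Fin n).val = last.val := by rw [hc]
    simp [hlast] at this
    omega
  have hpos2 : pos j2 = 0 := by
    rw [hposdef]
    split_ifs with h
    · exact Equiv.swap_apply_left _ _
    · simp only [Equiv.trans_apply, Equiv.swap_apply_left]
      exact Equiv.swap_apply_of_ne_of_ne (Ne.symm (hjw'ne h)) (hlastne h)
  have hposw : jw ≠ j2 → pos jw = last := by
    intro h
    rw [hposdef]
    rw [dif_neg h]
    simp only [Equiv.trans_apply]
    exact Equiv.swap_apply_left _ _
  set τ : Equiv.Perm (Fin n) := pos.symm with hτ
  set re : Fin n ≃ Fin n := Equiv.ofBijective r ((Finite.injective_iff_bijective).mp hr) with hre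
  set σ : Equiv.Perm (Fin n) := τ.trans re with hσ
  have hrecoe : ∀ j, re j = r j := fun _ => rfl
  set G : Matrix (Fin n) (Fin n) ℤ := F.submatrix σ τ with hG
  have hGentry : ∀ k l, G k l = F (r (τ k)) (τ l) := fun k l => rfl
  have hdetG : |G.det| = |F.det| := by
    have e1 : G = (F.submatrix σ id).submatrix id τ := by
      rw [Matrix.submatrix_submatrix]
      simp [hG]
    rw [e1, Matrix.det_permute', Matrix.det_permute]
    rcases Int.units_eq_one_or (Equiv.Perm.sign τ) with hs | hs <;>
      rcases Int.units_eq_one_or (Equiv.Perm.sign σ) with hs2 | hs2 <;>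
      simp [hs, hs2]
  have htri : G.BlockTriangular id := by
    intro k l hkl
    simp only [id] at hkl
    rw [hGentry]
    have hpj : pos (τ k) = k := pos.apply_symm_apply k
    have hpj' : pos (τ l) = l := pos.apply_symm_apply l
    have hkne0 : k ≠ 0 := by
      intro hc; rw [hc] at hkl; exact absurd hkl (by simp)
    have hjj2 : τ k ≠ j2 := by
      intro hc; exact hkne0 (by rw [← hpj, hc, hpos2])
    have hrj0 : r (τ k) ≠ 0 := fun hh => hjj2 (hr (hh.trans hj2.symm))
    by_cases hj'2 : τ l = j2
    · rw [hj'2]; exact hcol _ hrj0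
    · by_cases hj'w : τ l = jw
      · have hwj2 : jw ≠ j2 := fun hh => hj'2 (hj'w.trans hh)
        have hlv : l = last := by rw [← hpj', hj'w, hposw hwj2]
        exfalso
        have := k.isLt
        have h1 : l.val < k.val := hkl
        have h2 : l.val = n - 1 := by rw [hlv]
        omega
      · rw [hind (r (τ k)) (τ l) hrj0 hj'2 hj'w]
        have hne : τ l ≠ τ k := fun hh => hkl.ne (τ.injective hh)
        have : r (τ l) ≠ r (τ k) := fun hh => hne (hr hh)
        simp [this]
  have hprod : G.det = ∏ j, F (r j) j := by
    rw [Matrix.det_of_upperTriangular htri]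
    calc ∏ k, G k k = ∏ k, F (r (τ k)) (τ k) := rfl
      _ = ∏ j, F (r j) j := Equiv.prod_comp τ (fun j => F (r j) j)
  rw [← hdetG, hprod]
  apply abs_prod_le' _ j2 C hC
  · rw [hj2]; exact htop
  · intro j hj
    by_cases hjw : j = jw
    · subst hjw
      exact hw hj
    · have hrj0 : r j ≠ 0 := fun hh => hj (hr (hh.trans hj2.symm))
      rw [hind (r j) j hrj0 hj hjw]
      simp


lemma sum_allbut2 {n : ℕ} (v : Fin n → ℤ) (jw j2 : Fin n) (h : j2 ≠ jw) :
    (∑ k, (if k = jw then (1:ℤ) else if k = j2 then 0 else -1) • v k)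
      = v jw - ∑ k ∈ (univ.erase jw).erase j2, v k := by
  rw [← Finset.add_sum_erase univ _ (mem_univ jw)]
  have hj2m : j2 ∈ univ.erase jw := Finset.mem_erase.mpr ⟨h, mem_univ _⟩
  rw [← Finset.add_sum_erase (univ.erase jw) _ hj2m]
  have e1 : (if jw = jw then (1:ℤ) else if jw = j2 then 0 else -1) • v jw = v jw := by simp
  have e2 : (if j2 = jw then (1:ℤ) else if j2 = j2 then 0 else -1) • v j2 = 0 := by simp [h]
  rw [e1, e2]
  have h2 : ∀ k ∈ ((univ.erase jw).erase j2),
      (if k = jw then (1:ℤ) else if k = j2 then 0 else -1) • v k = -(v k) := by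
    intro k hk
    rw [if_neg (Finset.ne_of_mem_erase (Finset.mem_of_mem_erase hk)),
      if_neg (Finset.ne_of_mem_erase hk)]
    simp
  rw [Finset.sum_congr rfl h2, Finset.sum_neg_distrib]
  ring

lemma sum_allbut1 {n : ℕ} (v : Fin n → ℤ) (jw : Fin n) :
    (∑ k, (if k = jw then (1:ℤ) else -1) • v k)
      = v jw - ∑ k ∈ univ.erase jw, v k := by
  rw [← Finset.add_sum_erase univ _ (mem_univ jw)]
  have e1 : (if jw = jw then (1:ℤ) else -1) • v jw = v jw := by simp
  rw [e1]
  have h2 : ∀ k ∈ univ.erase jw,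
      (if k = jw then (1:ℤ) else -1) • v k = -(v k) := by
    intro k hk
    rw [if_neg (Finset.ne_of_mem_erase hk)]; simp
  rw [Finset.sum_congr rfl h2, Finset.sum_neg_distrib]
  ring

lemma sum_two_support {n : ℕ} (v : Fin n → ℤ) (j1 j2 : Fin n) (hne : j1 ≠ j2) (a b : ℤ) :
    (∑ k, (if k = j1 then a else if k = j2 then b else 0) • v k) = a * v j1 + b * v j2 := by
  have key : ∀ k : Fin n, (if k = j1 then a else if k = j2 then b else 0) • v k
      = (if k = j1 then a * v j1 else 0) + (if k = j2 then b * v j2 else 0) := by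
    intro k
    by_cases h1 : k = j1
    · subst h1; simp [hne]
    · by_cases h2 : k = j2
      · subst h2; simp [h1]
      · simp [h1, h2]
  rw [Finset.sum_congr rfl (fun k _ => key k), Finset.sum_add_distrib,
    Finset.sum_ite_eq' univ j1, Finset.sum_ite_eq' univ j2]
  simp

lemma sum_three_support {n : ℕ} (v : Fin n → ℤ) (j1 j2 j3 : Fin n)
    (h12 : j1 ≠ j2) (h13 : j1 ≠ j3) (h23 : j2 ≠ j3) (a b c : ℤ) :
    (∑ k, (if k = j1 then a else if k = j2 then b else if k = j3 then c else 0) • v k)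
      = a * v j1 + b * v j2 + c * v j3 := by
  have key : ∀ k : Fin n, (if k = j1 then a else if k = j2 then b else if k = j3 then c else 0) • v k
      = (if k = j1 then a * v j1 else 0) + (if k = j2 then b * v j2 else 0)
        + (if k = j3 then c * v j3 else 0) := by
    intro k
    by_cases h1 : k = j1
    · subst h1; simp [h12, h13]
    · by_cases h2 : k = j2
      · subst h2; simp [h1, h23]
      · by_cases h3 : k = j3
        · subst h3; simp [h1, h2]
        · simp [h1, h2, h3]
  rw [Finset.sum_congr rfl (fun k _ => key k), Finset.sum_add_distrib, Finset.sum_add_distrib,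
    Finset.sum_ite_eq' univ j1, Finset.sum_ite_eq' univ j2, Finset.sum_ite_eq' univ j3]
  simp

lemma nondeg (Δ : ℕ) (hΔ : 1 ≤ Δ) [NeZero (2 * Δ)] (A : Matrix (Fin (2*Δ)) (Fin (2*Δ)) ℤ)
    (h : Fin (2*Δ) → ℕ) (j2 : Fin (2*Δ))
    (hle : ∀ j, h j ≤ 2*Δ)
    (hlow : ∀ (i j : Fin (2*Δ)), i.val ≠ 0 → j ≠ j2 →
      A i j = if (h j = i.val ∨ h j = 2*Δ) then 1 else 0)
    (hinj : ∀ j j', j ≠ j2 → j' ≠ j2 → h j = h j' → j = j')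
    (hz : ∀ j, j ≠ j2 → h j ≠ 0)
    (hcol : ∀ i : Fin (2*Δ), i.val ≠ 0 → A i j2 = 0)
    (htop : |A 0 j2| ≤ (Δ:ℤ)) : |A.det| ≤ (Δ:ℤ) := by
  classical
  have hC : (1:ℤ) ≤ (Δ:ℤ) := by exact_mod_cast hΔ
  have hpos : 0 < 2*Δ := by omega
  have hv0 : ∀ i : Fin (2*Δ), i ≠ 0 → i.val ≠ 0 := by
    intro i hi hc
    exact hi (Fin.ext (by simp [hc]))
  by_cases hwex : ∃ jw, jw ≠ j2 ∧ h jw = 2*Δ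
  · obtain ⟨jw, hwne, hwn⟩ := hwex
    have hEr : ∀ j, j ≠ j2 → j ≠ jw → h j ≠ 0 ∧ h j < 2*Δ := by
      intro j hj hjw
      refine ⟨hz j hj, ?_⟩
      rcases Nat.lt_or_ge (h j) (2*Δ) with h1 | h1
      · exact h1
      · exfalso
        exact hjw (hinj j jw hj hwne (by have := hle j; omega))
    set c : Fin (2*Δ) → ℤ := fun k => if k = jw then 1 else if k = j2 then 0 else -1 with hc
    set A3 := A.updateCol jw (fun k => ∑ i, c i • A k i) with hA3
    have hdet3 : A3.det = A.det := by
      rw [hA3, Matrix.det_updateCol_sum]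
      simp [hc]
    have hA3ne : ∀ i j, j ≠ jw → A3 i j = A i j := by
      intro i j hj
      rw [hA3, Matrix.updateCol_ne hj]
    have hsum : ∀ i, A3 i jw = A i jw - ∑ k ∈ (univ.erase jw).erase j2, A i k := by
      intro i
      rw [hA3, Matrix.updateCol_self]
      exact sum_allbut2 (fun k => A i k) jw j2 (Ne.symm hwne)
    have hterm : ∀ (i : Fin (2*Δ)), i.val ≠ 0 → ∀ k ∈ (univ.erase jw).erase j2,
        A i k = if h k = i.val then 1 else 0 := by
      intro i hi k hk
      have hk2 : k ≠ j2 := Finset.ne_of_mem_erase hk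
      have hkw : k ≠ jw := Finset.ne_of_mem_erase (Finset.mem_of_mem_erase hk)
      rw [hlow i k hi hk2]
      have h1 := (hEr k hk2 hkw).2
      have h2 : ¬ (h k = 2*Δ) := by omega
      by_cases h3 : h k = i.val
      · simp [h3]
      · simp [h2, h3]
    have hSval : ∀ i : Fin (2*Δ), i.val ≠ 0 →
        (∑ k ∈ (univ.erase jw).erase j2, A i k) = 0 ∨
        (∑ k ∈ (univ.erase jw).erase j2, A i k) = 1 := by
      intro i hi
      by_cases hex : ∃ k ∈ (univ.erase jw).erase j2, h k = i.val
      · right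
        obtain ⟨k0, hk0s, hk0⟩ := hex
        rw [Finset.sum_eq_single k0]
        · rw [hterm i hi k0 hk0s]; simp [hk0]
        · intro k hks hkne
          rw [hterm i hi k hks]
          have hne2 : h k ≠ i.val := by
            intro hcc
            exact hkne (hinj k k0 (Finset.ne_of_mem_erase hks) (Finset.ne_of_mem_erase hk0s)
              (hcc.trans hk0.symm))
          simp [hne2]
        · intro hk0s'; exact absurd hk0s hk0s'
      · left
        apply Finset.sum_eq_zero
        intro k hks
        rw [hterm i hi k hks]
        have hne2 : h k ≠ i.val := fun hcc => hex ⟨k, hks, hcc⟩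
        simp [hne2]
    -- choose the leftover row m
    set r' : Fin (2*Δ) → Fin (2*Δ) :=
      fun j => if j = j2 then 0 else ⟨h j % (2*Δ), Nat.mod_lt _ hpos⟩ with hr'
    set t := Finset.image r' (univ.erase jw) with ht
    have htcard : t.card < 2*Δ := by
      calc t.card ≤ (univ.erase jw).card := Finset.card_image_le
        _ = 2*Δ - 1 := by rw [Finset.card_erase_of_mem (mem_univ _), Finset.card_univ, Fintype.card_fin]
        _ < 2*Δ := by omega
    have hmex : ∃ m : Fin (2*Δ), m ∉ t := by
      by_contra hcon
      push_neg at hcon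
      have hsub : (univ : Finset (Fin (2*Δ))) ⊆ t := fun x _ => hcon x
      have := Finset.card_le_card hsub
      rw [Finset.card_univ, Fintype.card_fin] at this
      omega
    obtain ⟨m, hm⟩ := hmex
    have hm0 : m ≠ 0 := by
      intro hcc
      apply hm
      rw [ht]
      refine Finset.mem_image.mpr ⟨j2, Finset.mem_erase.mpr ⟨Ne.symm hwne, mem_univ _⟩, ?_⟩
      rw [hr']
      simp [hcc.symm]
    have hmval : ∀ j, j ≠ j2 → j ≠ jw → m.val ≠ h j := by
      intro j hj hjw hcc
      apply hm
      rw [ht]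
      refine Finset.mem_image.mpr ⟨j, Finset.mem_erase.mpr ⟨hjw, mem_univ _⟩, ?_⟩
      simp only [hr', if_neg hj]
      apply Fin.ext
      simp only [Fin.val_mk]
      rw [Nat.mod_eq_of_lt (hEr j hj hjw).2]
      exact hcc.symm
    set r : Fin (2*Δ) → Fin (2*Δ) := fun j => if j = jw then m else r' j with hrdef
    have hrj2 : r j2 = 0 := by rw [hrdef]; simp only [if_neg (Ne.symm hwne)]; rw [hr']; simp
    have hrjw : r jw = m := by rw [hrdef]; simp
    have hrE : ∀ j, j ≠ j2 → j ≠ jw → (r j).val = h j := by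
      intro j hj hjw
      rw [hrdef]
      simp only [if_neg hjw, hr', if_neg hj, Fin.val_mk]
      exact Nat.mod_eq_of_lt (hEr j hj hjw).2
    have hrinj : Function.Injective r := by
      intro a b hab
      by_cases haw : a = jw <;> by_cases hbw : b = jw
      · rw [haw, hbw]
      · exfalso
        rw [haw, hrjw] at hab
        by_cases hb2 : b = j2
        · rw [hb2, hrj2] at hab; exact hm0 hab
        · have := hrE b hb2 hbw
          exact hmval b hb2 hbw (by rw [hab, this])
      · exfalso
        rw [hbw, hrjw] at hab
        by_cases ha2 : a = j2
        · rw [ha2, hrj2] at hab; exact hm0 hab.symm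
        · have := hrE a ha2 haw
          exact hmval a ha2 haw (by rw [← hab, this])
      · by_cases ha2 : a = j2 <;> by_cases hb2 : b = j2
        · rw [ha2, hb2]
        · exfalso
          rw [ha2, hrj2] at hab
          have h1 := hrE b hb2 hbw
          have h2 := (hEr b hb2 hbw).1
          have : (0 : Fin (2*Δ)).val = h b := by rw [hab, h1]
          simp at this
          exact h2 this.symm
        · exfalso
          rw [hb2, hrj2] at hab
          have h1 := hrE a ha2 haw
          have h2 := (hEr a ha2 haw).1
          have : (0 : Fin (2*Δ)).val = h a := by rw [← hab, h1]
          simp at this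
          exact h2 this.symm
        · apply hinj a b ha2 hb2
          rw [← hrE a ha2 haw, ← hrE b hb2 hbw, hab]
    have hres := key A3 r hrinj j2 jw (Δ:ℤ) hC hrj2 ?_ ?_ ?_ ?_
    · rw [hdet3] at hres; exact hres
    · -- hcol
      intro i hi
      rw [hA3ne i j2 (Ne.symm hwne)]
      exact hcol i (hv0 i hi)
    · -- hind
      intro i j hi hj hjw
      rw [hA3ne i j hjw, hlow i j (hv0 i hi) hj]
      have h1 := (hEr j hj hjw).2
      have h2 : ¬ (h j = 2*Δ) := by omega
      have h3 : (r j = i) ↔ (h j = i.val) := by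
        rw [Fin.ext_iff, hrE j hj hjw]
      by_cases h4 : h j = i.val
      · rw [if_pos (Or.inl h4), if_pos (h3.mpr h4)]
      · rw [if_neg (by tauto), if_neg (fun hc => h4 (h3.mp hc))]
    · -- hw
      intro _
      rw [hrjw, hsum m]
      have hAm : A m jw = 1 := by
        rw [hlow m jw (hv0 m hm0) hwne]
        simp [hwn]
      rw [hAm]
      rcases hSval m (hv0 m hm0) with hS | hS <;> rw [hS] <;> norm_num
    · -- htop
      rw [hA3ne 0 j2 (Ne.symm hwne)]
      exact htop
  · push_neg at hwex
    have hEr : ∀ j, j ≠ j2 → h j ≠ 0 ∧ h j < 2*Δ := by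
      intro j hj
      refine ⟨hz j hj, ?_⟩
      have h1 := hle j
      have h2 := hwex j hj
      omega
    set r : Fin (2*Δ) → Fin (2*Δ) :=
      fun j => if j = j2 then 0 else ⟨h j % (2*Δ), Nat.mod_lt _ hpos⟩ with hrdef
    have hrj2 : r j2 = 0 := by rw [hrdef]; simp
    have hrE : ∀ j, j ≠ j2 → (r j).val = h j := by
      intro j hj
      simp only [hrdef, if_neg hj, Fin.val_mk]
      exact Nat.mod_eq_of_lt (hEr j hj).2
    have hrinj : Function.Injective r := by
      intro a b hab
      by_cases ha2 : a = j2 <;> by_cases hb2 : b = j2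
      · rw [ha2, hb2]
      · exfalso
        rw [ha2, hrj2] at hab
        have h1 := hrE b hb2
        have h2 := (hEr b hb2).1
        have : (0 : Fin (2*Δ)).val = h b := by rw [hab, h1]
        simp at this
        exact h2 this.symm
      · exfalso
        rw [hb2, hrj2] at hab
        have h1 := hrE a ha2
        have h2 := (hEr a ha2).1
        have : (0 : Fin (2*Δ)).val = h a := by rw [← hab, h1]
        simp at this
        exact h2 this.symm
      · apply hinj a b ha2 hb2
        rw [← hrE a ha2, ← hrE b hb2, hab]
    apply key A r hrinj j2 j2 (Δ:ℤ) hC hrj2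
    · intro i hi
      exact hcol i (hv0 i hi)
    · intro i j hi hj _
      rw [hlow i j (hv0 i hi) hj]
      have h1 := (hEr j hj).2
      have h2 : ¬ (h j = 2*Δ) := by omega
      have h3 : (r j = i) ↔ (h j = i.val) := by
        rw [Fin.ext_iff, hrE j hj]
      by_cases h4 : h j = i.val
      · rw [if_pos (Or.inl h4), if_pos (h3.mpr h4)]
      · rw [if_neg (by tauto), if_neg (fun hc => h4 (h3.mp hc))]
    · intro hcc; exact absurd rfl hcc
    · exact htop

lemma coll (Δ : ℕ) (hΔ : 1 ≤ Δ) [NeZero (2 * Δ)] (A : Matrix (Fin (2*Δ)) (Fin (2*Δ)) ℤ)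
    (h : Fin (2*Δ) → ℕ)
    (hle : ∀ j, h j ≤ 2*Δ)
    (hlow : ∀ (i j : Fin (2*Δ)), i.val ≠ 0 →
      A i j = if (h j = i.val ∨ h j = 2*Δ) then 1 else 0)
    (htop0 : ∀ j, h j = 0 → A 0 j = 1)
    (htopC : ∀ ja jb, ja ≠ jb → h ja = h jb →
      h ja ≠ 0 ∧ (A 0 ja - A 0 jb = 1 ∨ A 0 jb - A 0 ja = 1))
    (j1 j2 : Fin (2*Δ)) (hne : j1 ≠ j2) (hhh : h j1 = h j2) : |A.det| ≤ (Δ:ℤ) := by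
  classical
  have hC : (1:ℤ) ≤ (Δ:ℤ) := by exact_mod_cast hΔ
  have hv0 : ∀ i : Fin (2*Δ), i ≠ 0 → i.val ≠ 0 := by
    intro i hi hcc
    exact hi (Fin.ext (by simp [hcc]))
  have hε := (htopC j1 j2 hne hhh).2
  set c1 : Fin (2*Δ) → ℤ := fun k => if k = j2 then (1:ℤ) else if k = j1 then -1 else 0 with hc1
  set A1 := A.updateCol j2 (fun k => ∑ i, c1 i • A k i) with hA1
  have hdet1 : A1.det = A.det := by
    rw [hA1, Matrix.det_updateCol_sum]
    simp [hc1]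
  have hA1ne : ∀ i j, j ≠ j2 → A1 i j = A i j := by
    intro i j hj
    rw [hA1, Matrix.updateCol_ne hj]
  have hA1j2 : ∀ i, A1 i j2 = A i j2 - A i j1 := by
    intro i
    rw [hA1, Matrix.updateCol_self, sum_two_support (fun k => A i k) j2 j1 (Ne.symm hne)]
    ring
  have hA1low : ∀ i : Fin (2*Δ), i.val ≠ 0 → A1 i j2 = 0 := by
    intro i hi
    rw [hA1j2, hlow i j2 hi, hlow i j1 hi, hhh]
    ring
  set ε := A 0 j2 - A 0 j1 with hεdef
  have hεsq : ε * ε = 1 := by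
    rcases hε with h1 | h1
    · have : ε = -1 := by rw [hεdef]; omega
      rw [this]; norm_num
    · have : ε = 1 := by rw [hεdef]; omega
      rw [this]; norm_num
  have hA1top2 : A1 0 j2 = ε := hA1j2 0
  have habs : |A1 0 j2| = 1 := by
    rw [hA1top2]
    rcases hε with h1 | h1
    · rw [show ε = -1 by rw [hεdef]; omega]; norm_num
    · rw [show ε = 1 by rw [hεdef]; omega]; norm_num
  by_cases hzC : ∃ j3, j3 ≠ j2 ∧ (h j3 = 0 ∨ ∃ j4, j4 ≠ j3 ∧ j4 ≠ j2 ∧ h j4 = h j3)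
  · obtain ⟨j3, hj32, hcase⟩ := hzC
    have hzero : A1.det = 0 := by
      rcases hcase with hz3 | ⟨j4, hj43, hj42, hh34⟩
      · set c2 : Fin (2*Δ) → ℤ := fun k => if k = j3 then (1:ℤ) else if k = j2 then -ε else 0
          with hc2
        set A2 := A1.updateCol j3 (fun k => ∑ i, c2 i • A1 k i) with hA2
        have hd2 : A2.det = A1.det := by
          rw [hA2, Matrix.det_updateCol_sum]
          simp [hc2, hj32]
        have hval : ∀ k, A2 k j3 = A1 k j3 - ε * A1 k j2 := by
          intro k
          rw [hA2, Matrix.updateCol_self]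
          simp only [hc2]
          rw [sum_two_support (fun i => A1 k i) j3 j2 hj32]
          ring
        have hcolzero : ∀ k, A2 k j3 = 0 := by
          intro k
          rw [hval]
          by_cases hk : k.val = 0
          · have hk0 : k = 0 := Fin.ext (by simp [hk])
            rw [hk0, hA1ne 0 j3 hj32, htop0 j3 hz3, hA1top2]
            linear_combination (-1 : ℤ) * hεsq
          · rw [hA1ne k j3 hj32, hlow k j3 hk, hA1low k hk]
            have h1 : ¬ (h j3 = k.val ∨ h j3 = 2*Δ) := by
              rw [hz3]
              push_neg
              constructor
              · intro hcc; exact hk hcc.symm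
              · omega
            rw [if_neg h1]
            ring
        rw [← hd2]
        exact Matrix.det_eq_zero_of_column_eq_zero j3 hcolzero
      · set c2 : Fin (2*Δ) → ℤ :=
          fun k => if k = j3 then (1:ℤ) else if k = j4 then -1
            else if k = j2 then -((A 0 j3 - A 0 j4)*ε) else 0
          with hc2
        set A2 := A1.updateCol j3 (fun k => ∑ i, c2 i • A1 k i) with hA2
        have hd2 : A2.det = A1.det := by
          rw [hA2, Matrix.det_updateCol_sum]
          simp [hc2, hj32, Ne.symm hj43]
        have hval : ∀ k, A2 k j3 = A1 k j3 - A1 k j4 - ((A 0 j3 - A 0 j4)*ε) * A1 k j2 := by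
          intro k
          rw [hA2, Matrix.updateCol_self]
          simp only [hc2]
          rw [sum_three_support (fun i => A1 k i) j3 j4 j2 (Ne.symm hj43) hj32 hj42]
          ring
        have hcolzero : ∀ k, A2 k j3 = 0 := by
          intro k
          rw [hval]
          by_cases hk : k.val = 0
          · have hk0 : k = 0 := Fin.ext (by simp [hk])
            rw [hk0, hA1ne 0 j3 hj32, hA1ne 0 j4 hj42, hA1top2]
            linear_combination (-(A 0 j3 - A 0 j4) : ℤ) * hεsq
          · rw [hA1ne k j3 hj32, hA1ne k j4 hj42, hlow k j3 hk, hlow k j4 hk, hh34,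
              hA1low k hk]
            ring
        rw [← hd2]
        exact Matrix.det_eq_zero_of_column_eq_zero j3 hcolzero
    rw [← hdet1, hzero]
    simp
  · push_neg at hzC
    rw [← hdet1]
    apply nondeg Δ hΔ A1 h j2 hle
    · intro i j hi hj
      rw [hA1ne i j hj]
      exact hlow i j hi
    · intro j j' hj hj' hjj
      by_contra hne'
      exact (hzC j' hj').2 j hne' hj hjj
    · intro j hj
      exact (hzC j hj).1
    · exact hA1low
    · rw [habs]
      exact hC
lemma main_aux (Δ : ℕ) (hΔ : 1 ≤ Δ) [NeZero (2 * Δ)] (A : Matrix (Fin (2*Δ)) (Fin (2*Δ)) ℤ)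
    (h : Fin (2*Δ) → ℕ)
    (hle : ∀ j, h j ≤ 2*Δ)
    (hlow : ∀ (i j : Fin (2*Δ)), i.val ≠ 0 →
      A i j = if (h j = i.val ∨ h j = 2*Δ) then 1 else 0)
    (htop0 : ∀ j, h j = 0 → A 0 j = 1)
    (htopE : ∀ j, h j ≠ 0 → h j ≠ 2*Δ → (A 0 j = 0 ∨ A 0 j = 1))
    (htopP : ∀ j, h j = 2*Δ → (A 0 j = (Δ:ℤ) - 1 ∨ A 0 j = (Δ:ℤ)))
    (htopC : ∀ ja jb, ja ≠ jb → h ja = h jb →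
      h ja ≠ 0 ∧ (A 0 ja - A 0 jb = 1 ∨ A 0 jb - A 0 ja = 1)) :
    |A.det| ≤ (Δ:ℤ) := by
  classical
  have hC : (1:ℤ) ≤ (Δ:ℤ) := by exact_mod_cast hΔ
  have hpos : 0 < 2*Δ := by omega
  have hv0 : ∀ i : Fin (2*Δ), i ≠ 0 → i.val ≠ 0 := by
    intro i hi hcc
    exact hi (Fin.ext (by simp [hcc]))
  by_cases hc1 : ∃ ja jb, ja ≠ jb ∧ h ja = h jb
  · obtain ⟨ja, jb, hne, hhh⟩ := hc1
    exact coll Δ hΔ A h hle hlow htop0 htopC ja jb hne hhh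
  · push_neg at hc1
    have hinj : ∀ ja jb, h ja = h jb → ja = jb := by
      intro ja jb hjj
      by_contra hne
      exact hc1 ja jb hne hjj
    by_cases hz0 : ∃ j0, h j0 = 0
    · obtain ⟨j0, hj0⟩ := hz0
      apply nondeg Δ hΔ A h j0 hle
      · intro i j hi _; exact hlow i j hi
      · intro j j' _ _ hjj; exact hinj j j' hjj
      · intro j hj hcc; exact hj (hinj j j0 (hcc.trans hj0.symm))
      · intro i hi
        rw [hlow i j0 hi]
        have hnot : ¬ (h j0 = i.val ∨ h j0 = 2*Δ) := by
          rw [hj0]; push_neg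
          exact ⟨fun hcc => hi hcc.symm, by omega⟩
        rw [if_neg hnot]
      · rw [htop0 j0 hj0]; simpa using hC
    · push_neg at hz0
      have hrange : ∀ j, 1 ≤ h j ∧ h j ≤ 2*Δ :=
        fun j => ⟨Nat.one_le_iff_ne_zero.mpr (hz0 j), hle j⟩
      set e : Fin (2*Δ) → Fin (2*Δ) := fun j => ⟨h j - 1, by have := (hrange j).1; have := (hrange j).2; omega⟩ with he
      have heinj : Function.Injective e := by
        intro a b hab
        apply hinj
        have h1 : h a - 1 = h b - 1 := congrArg Fin.val hab
        have := (hrange a).1; have := (hrange b).1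
        omega
      have hesurj : Function.Surjective e := (Finite.injective_iff_surjective).mp heinj
      obtain ⟨jw, hjww⟩ := hesurj ⟨2*Δ - 1, by omega⟩
      have hwn : h jw = 2*Δ := by
        have h1 : h jw - 1 = 2*Δ - 1 := congrArg Fin.val hjww
        have := (hrange jw).1
        omega
      have hne2Δ : ∀ j, j ≠ jw → h j < 2*Δ := by
        intro j hj
        have h1 := (hrange j).2
        rcases Nat.lt_or_ge (h j) (2*Δ) with h2 | h2
        · exact h2
        · exact absurd (hinj j jw (by omega)) hj
      have hcover : ∀ i : Fin (2*Δ), i.val ≠ 0 → ∃ k, k ≠ jw ∧ h k = i.val := by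
        intro i hi
        obtain ⟨k, hk⟩ := hesurj ⟨i.val - 1, by have := i.isLt; omega⟩
        have hkval : h k = i.val := by
          have h1 : h k - 1 = i.val - 1 := congrArg Fin.val hk
          have := (hrange k).1; have := i.isLt
          omega
        refine ⟨k, ?_, hkval⟩
        intro hcc
        rw [hcc, hwn] at hkval
        have := i.isLt
        omega
      set c : Fin (2*Δ) → ℤ := fun k => if k = jw then 1 else -1 with hc
      set A3 := A.updateCol jw (fun k => ∑ i, c i • A k i) with hA3
      have hdet3 : A3.det = A.det := by
        rw [hA3, Matrix.det_updateCol_sum]; simp [hc]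
      have hA3ne : ∀ i j, j ≠ jw → A3 i j = A i j := by
        intro i j hj
        rw [hA3, Matrix.updateCol_ne hj]
      have hsum : ∀ i, A3 i jw = A i jw - ∑ k ∈ univ.erase jw, A i k := by
        intro i
        rw [hA3, Matrix.updateCol_self]
        simp only [hc]
        exact sum_allbut1 (fun k => A i k) jw
      have hterm : ∀ (i : Fin (2*Δ)), i.val ≠ 0 → ∀ k ∈ univ.erase jw,
          A i k = if h k = i.val then 1 else 0 := by
        intro i hi k hk
        have hkw : k ≠ jw := Finset.ne_of_mem_erase hk
        rw [hlow i k hi]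
        have h1 := hne2Δ k hkw
        have h2 : ¬ (h k = 2*Δ) := by omega
        by_cases h3 : h k = i.val
        · simp [h3]
        · simp [h2, h3]
      have hcol3 : ∀ i : Fin (2*Δ), i.val ≠ 0 → A3 i jw = 0 := by
        intro i hi
        rw [hsum i]
        have hjw1 : A i jw = 1 := by
          rw [hlow i jw hi]
          simp [hwn]
        obtain ⟨k0, hk0w, hk0⟩ := hcover i hi
        have hsum1 : (∑ k ∈ univ.erase jw, A i k) = 1 := by
          rw [Finset.sum_eq_single k0]
          · rw [hterm i hi k0 (Finset.mem_erase.mpr ⟨hk0w, mem_univ _⟩)]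
            simp [hk0]
          · intro k hks hkne
            rw [hterm i hi k hks]
            have : h k ≠ i.val := by
              intro hcc
              exact hkne (hinj k k0 (hcc.trans hk0.symm))
            simp [this]
          · intro hk0s'
            exact absurd (Finset.mem_erase.mpr ⟨hk0w, mem_univ _⟩) hk0s'
        rw [hjw1, hsum1]
        ring
      set r : Fin (2*Δ) → Fin (2*Δ) :=
        fun j => if j = jw then 0 else ⟨h j % (2*Δ), Nat.mod_lt _ hpos⟩ with hrdef
      have hrjw : r jw = 0 := by rw [hrdef]; simp
      have hrE : ∀ j, j ≠ jw → (r j).val = h j := by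
        intro j hj
        simp only [hrdef, if_neg hj, Fin.val_mk]
        exact Nat.mod_eq_of_lt (hne2Δ j hj)
      have hrinj : Function.Injective r := by
        intro a b hab
        by_cases haw : a = jw <;> by_cases hbw : b = jw
        · rw [haw, hbw]
        · exfalso
          rw [haw, hrjw] at hab
          have h1 := hrE b hbw
          have : (0 : Fin (2*Δ)).val = h b := by rw [hab, h1]
          simp at this
          exact hz0 b this.symm
        · exfalso
          rw [hbw, hrjw] at hab
          have h1 := hrE a haw
          have : (0 : Fin (2*Δ)).val = h a := by rw [← hab, h1]
          simp at this
          exact hz0 a this.symm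
        · exact hinj a b (by rw [← hrE a haw, ← hrE b hbw, hab])
      have hres := key A3 r hrinj jw jw (Δ:ℤ) hC hrjw ?_ ?_ ?_ ?_
      · rw [hdet3] at hres; exact hres
      · intro i hi
        exact hcol3 i (hv0 i hi)
      · intro i j hi hj _
        rw [hA3ne i j hj, hlow i j (hv0 i hi)]
        have h1 := hne2Δ j hj
        have h2 : ¬ (h j = 2*Δ) := by omega
        have h3 : (r j = i) ↔ (h j = i.val) := by
          rw [Fin.ext_iff, hrE j hj]
        by_cases h4 : h j = i.val
        · rw [if_pos (Or.inl h4), if_pos (h3.mpr h4)]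
        · rw [if_neg (by tauto), if_neg (fun hcc => h4 (h3.mp hcc))]
      · intro hcc; exact absurd rfl hcc
      · -- htop
        rw [hsum 0]
        set T := ∑ k ∈ univ.erase jw, A 0 k with hT
        have hT0 : 0 ≤ T := by
          apply Finset.sum_nonneg
          intro k hk
          have hkw : k ≠ jw := Finset.ne_of_mem_erase hk
          have h2 : h k ≠ 2*Δ := by have := hne2Δ k hkw; omega
          rcases htopE k (hz0 k) h2 with h3 | h3 <;> rw [h3] <;> norm_num
        have hTub : T ≤ ((2*Δ - 1 : ℕ) : ℤ) := by
          have h1 : T ≤ (univ.erase jw).card • (1:ℤ) := by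
            apply Finset.sum_le_card_nsmul
            intro k hk
            have hkw : k ≠ jw := Finset.ne_of_mem_erase hk
            have h2 : h k ≠ 2*Δ := by have := hne2Δ k hkw; omega
            rcases htopE k (hz0 k) h2 with h3 | h3 <;> rw [h3] <;> norm_num
          have h2 : (univ.erase jw).card = 2*Δ - 1 := by
            rw [Finset.card_erase_of_mem (mem_univ _), Finset.card_univ, Fintype.card_fin]
          rw [h2] at h1
          simpa using h1
        have hcast : ((2*Δ - 1 : ℕ) : ℤ) = 2*(Δ:ℤ) - 1 := by omega
        rw [hcast] at hTub
        rcases htopP jw hwn with h1 | h1 <;> rw [h1] <;>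
          exact abs_le.mpr ⟨by linarith, by linarith⟩


/-- The matrix `spikeMatrix Δ` is `Δ`-modular: every `2Δ × 2Δ` submatrix has determinant of
absolute value at most `Δ`. -/
theorem spikeMatrix_deltaModular (Δ : ℕ) (hΔ : 1 ≤ Δ) :
    ∀ (f : Fin (2 * Δ) → Fin (2 * Δ)) (g : Fin (2 * Δ) → Fin (4 * Δ + 1)),
      |((spikeMatrix Δ).submatrix f g).det| ≤ (Δ : ℤ) := by
  intro f g
  haveI : NeZero (2 * Δ) := ⟨by omega⟩
  classical
  by_cases hf : Function.Injective f
  swap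
  · rw [Function.not_injective_iff] at hf
    obtain ⟨i1, i2, heq, hne⟩ := hf
    have hzero : ((spikeMatrix Δ).submatrix f g).det = 0 := by
      apply Matrix.det_zero_of_row_eq hne
      funext j
      simp only [Matrix.submatrix_apply, heq]
    rw [hzero]
    simp
  by_cases hg : Function.Injective g
  swap
  · rw [Function.not_injective_iff] at hg
    obtain ⟨j1, j2, heq, hne⟩ := hg
    have hzero : ((spikeMatrix Δ).submatrix f g).det = 0 := by
      apply Matrix.det_zero_of_column_eq hne
      intro k
      simp only [Matrix.submatrix_apply, heq]
    rw [hzero]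
    simp
  set ef := Equiv.ofBijective f ((Finite.injective_iff_bijective).mp hf) with hef
  have hsub : (spikeMatrix Δ).submatrix f g
      = ((spikeMatrix Δ).submatrix id g).submatrix (⇑ef) id := rfl
  rw [hsub, Matrix.det_permute]
  suffices hmain : |((spikeMatrix Δ).submatrix id g).det| ≤ (Δ:ℤ) by
    rcases Int.units_eq_one_or (Equiv.Perm.sign ef) with hs | hs <;> rw [hs] <;> simpa using hmain
  set A := (spikeMatrix Δ).submatrix id g with hA
  set h : Fin (2*Δ) → ℕ := fun j =>
    if (g j).val = 0 then 0
    else if (g j).val ≤ 2*Δ - 1 then (g j).val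
    else if (g j).val ≤ 4*Δ - 2 then (g j).val - (2*Δ - 1)
    else 2*Δ
    with hh
  have hcomp : ∀ j : Fin (2*Δ), h j =
      if (g j).val = 0 then 0
      else if (g j).val ≤ 2*Δ - 1 then (g j).val
      else if (g j).val ≤ 4*Δ - 2 then (g j).val - (2*Δ - 1)
      else 2*Δ := fun j => rfl
  have hspike : ∀ (i : Fin (2*Δ)) (jj : Fin (4*Δ+1)), spikeMatrix Δ i jj =
      (if jj.val = 0 then (if i.val = 0 then (1:ℤ) else 0)
       else if jj.val ≤ 2*Δ - 1 then (if i.val = jj.val then 1 else 0)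
       else if jj.val ≤ 4*Δ-2 then
         (if i.val = 0 then 1 else if i.val = jj.val - (2*Δ-1) then 1 else 0)
       else if jj.val = 4*Δ-1 then (if i.val = 0 then (Δ:ℤ)-1 else 1)
       else (if i.val = 0 then (Δ:ℤ) else 1)) := fun i jj => rfl
  have hAval : ∀ (i j : Fin (2*Δ)), A i j = spikeMatrix Δ i (g j) := fun i j => rfl
  have hcases : ∀ j : Fin (2*Δ), (g j).val = 0 ∨ (1 ≤ (g j).val ∧ (g j).val ≤ 2*Δ-1)
      ∨ ((2*Δ-1) < (g j).val ∧ (g j).val ≤ 4*Δ-2) ∨ (g j).val = 4*Δ-1 ∨ (g j).val = 4*Δ := by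
    intro j
    have := (g j).isLt
    omega
  have hval0 : (0 : Fin (2*Δ)).val = 0 := rfl
  have hclass : ∀ j : Fin (2*Δ),
      ((g j).val = 0 ∧ h j = 0 ∧ A 0 j = 1) ∨
      ((1 ≤ (g j).val ∧ (g j).val ≤ 2*Δ-1) ∧ h j = (g j).val ∧ A 0 j = 0) ∨
      ((2*Δ-1 < (g j).val ∧ (g j).val ≤ 4*Δ-2) ∧ h j = (g j).val - (2*Δ-1) ∧ A 0 j = 1) ∨
      ((g j).val = 4*Δ-1 ∧ h j = 2*Δ ∧ A 0 j = (Δ:ℤ)-1) ∨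
      ((g j).val = 4*Δ ∧ h j = 2*Δ ∧ A 0 j = (Δ:ℤ)) := by
    intro j
    rcases hcases j with h0 | h1 | h2 | h3 | h4
    · refine Or.inl ⟨h0, ?_, ?_⟩
      · rw [hcomp, if_pos h0]
      · rw [hAval, hspike, if_pos h0, if_pos hval0]
    · refine Or.inr (Or.inl ⟨h1, ?_, ?_⟩)
      · rw [hcomp, if_neg (by omega), if_pos h1.2]
      · rw [hAval, hspike, if_neg (by omega), if_pos h1.2, if_neg (by omega)]
    · refine Or.inr (Or.inr (Or.inl ⟨h2, ?_, ?_⟩))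
      · rw [hcomp, if_neg (by omega), if_neg (by omega), if_pos h2.2]
      · rw [hAval, hspike, if_neg (by omega), if_neg (by omega), if_pos h2.2, if_pos hval0]
    · refine Or.inr (Or.inr (Or.inr (Or.inl ⟨h3, ?_, ?_⟩)))
      · rw [hcomp, if_neg (by omega), if_neg (by omega), if_neg (by omega)]
      · rw [hAval, hspike, if_neg (by omega), if_neg (by omega), if_neg (by omega),
          if_pos h3, if_pos hval0]
    · refine Or.inr (Or.inr (Or.inr (Or.inr ⟨h4, ?_, ?_⟩)))
      · rw [hcomp, if_neg (by omega), if_neg (by omega), if_neg (by omega)]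
      · rw [hAval, hspike, if_neg (by omega), if_neg (by omega), if_neg (by omega),
          if_neg (by omega), if_pos hval0]
  apply main_aux Δ hΔ A h
  · -- hle
    intro j
    rw [hcomp]
    split_ifs <;> omega
  · -- hlow
    intro i j hi
    rcases hcases j with h0 | h1 | h2 | h3 | h4
    · have hjv : h j = 0 := by rw [hcomp, if_pos h0]
      rw [hjv, hAval, hspike, if_pos h0, if_neg hi, if_neg (by omega)]
    · have hjv : h j = (g j).val := by rw [hcomp, if_neg (by omega), if_pos h1.2]
      rw [hjv, hAval, hspike, if_neg (by omega), if_pos h1.2]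
      by_cases hiw : i.val = (g j).val
      · rw [if_pos hiw, if_pos (Or.inl hiw.symm)]
      · rw [if_neg hiw, if_neg (by omega)]
    · have hjv : h j = (g j).val - (2*Δ-1) := by
        rw [hcomp, if_neg (by omega), if_neg (by omega), if_pos h2.2]
      rw [hjv, hAval, hspike, if_neg (by omega), if_neg (by omega), if_pos h2.2, if_neg hi]
      by_cases hiw : i.val = (g j).val - (2*Δ-1)
      · rw [if_pos hiw, if_pos (Or.inl hiw.symm)]
      · rw [if_neg hiw, if_neg (by omega)]
    · have hjv : h j = 2*Δ := by
        rw [hcomp, if_neg (by omega), if_neg (by omega), if_neg (by omega)]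
      rw [hjv, hAval, hspike, if_neg (by omega), if_neg (by omega), if_neg (by omega),
        if_pos h3, if_neg hi, if_pos (Or.inr rfl)]
    · have hjv : h j = 2*Δ := by
        rw [hcomp, if_neg (by omega), if_neg (by omega), if_neg (by omega)]
      rw [hjv, hAval, hspike, if_neg (by omega), if_neg (by omega), if_neg (by omega),
        if_neg (by omega), if_neg hi, if_pos (Or.inr rfl)]
  · -- htop0
    intro j hj0
    rcases hclass j with ⟨hc, hH, hAv⟩ | ⟨hc, hH, hAv⟩ | ⟨hc, hH, hAv⟩ | ⟨hc, hH, hAv⟩ |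
      ⟨hc, hH, hAv⟩ <;> first | exact hAv | (exfalso; omega)
  · -- htopE
    intro j hj1 hj2
    rcases hclass j with ⟨hc, hH, hAv⟩ | ⟨hc, hH, hAv⟩ | ⟨hc, hH, hAv⟩ | ⟨hc, hH, hAv⟩ |
      ⟨hc, hH, hAv⟩ <;> first | exact Or.inl hAv | exact Or.inr hAv | (exfalso; omega)
  · -- htopP
    intro j hj
    rcases hclass j with ⟨hc, hH, hAv⟩ | ⟨hc, hH, hAv⟩ | ⟨hc, hH, hAv⟩ | ⟨hc, hH, hAv⟩ |
      ⟨hc, hH, hAv⟩ <;> first | exact Or.inl hAv | exact Or.inr hAv | (exfalso; omega)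
  · -- htopC
    intro ja jb hne hhh
    have hgne : (g ja).val ≠ (g jb).val := fun hcc => hne (hg (Fin.ext hcc))
    rcases hclass ja with ⟨hca, hHa, hAa⟩ | ⟨hca, hHa, hAa⟩ | ⟨hca, hHa, hAa⟩ |
        ⟨hca, hHa, hAa⟩ | ⟨hca, hHa, hAa⟩ <;>
      rcases hclass jb with ⟨hcb, hHb, hAb⟩ | ⟨hcb, hHb, hAb⟩ | ⟨hcb, hHb, hAb⟩ |
        ⟨hcb, hHb, hAb⟩ | ⟨hcb, hHb, hAb⟩ <;>
      refine ⟨by omega, ?_⟩ <;> rw [hAa, hAb] <;>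
      first
        | (exfalso; omega)
        | (left; ring1)
        | (right; ring1)
end

section
/- Let Δ ≥ 1, r ≥ 1 and let A = [I_r | D_r | f] where D_r has columns e_i − e_j for 1 ≤ i < j ≤ r and f ∈ ℤ^r. If A is Δ-modular, then the sum of the positive entries of f is at most Δ and the sum of the absolute values of the negative entries of f is at most Δ. -/
/-!
For `i₀ ∈ S`, choose the columns `f` at `i₀`, `±(eᵢ − e_{i₀})` for `i ∈ S \ {i₀}` and `eᵢ`
elsewhere. Up to column signs this is `M = 1 − e_{i₀} vᵀ` (with `v` the indicator of `S \ {i₀}`)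
with column `i₀` replaced by `f`. Since `det M = 1` and `f = M x` with `x = f + (v ⬝ f) e_{i₀}`,
Cramer's rule gives the determinant `x_{i₀} = ∑_{i ∈ S} fᵢ`. Taking for `S` the positive, resp.
negative, support of `f` gives the two bounds.
-/

/-- The matrix `[I_r | D_r | f]`, where `D_r` has columns `eᵢ − eⱼ` for `i < j`. -/
def cliqueExtMatrix (r : ℕ) (f : Fin r → ℤ) :
    Matrix (Fin r) (Fin r ⊕ {p : Fin r × Fin r // p.1 < p.2} ⊕ Unit) ℤ :=
  Matrix.of fun i j =>
    match j with
    | Sum.inl k => if i = k then 1 else 0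
    | Sum.inr (Sum.inl p) => (if i = p.1.1 then 1 else 0) - (if i = p.1.2 then 1 else 0)
    | Sum.inr (Sum.inr _) => f i

open Matrix

namespace Matrix

variable {n R : Type*} [Fintype n] [DecidableEq n]

theorem det_updateCol_mulVec [CommRing R] (A : Matrix n n R) (j : n) (x : n → R) :
    (A.updateCol j (A *ᵥ x)).det = A.det * x j := by
  rw [← cramer_apply, cramer_eq_adjugate_mulVec, mulVec_mulVec, adjugate_mul, smul_mulVec,
    one_mulVec, Pi.smul_apply, smul_eq_mul]

theorem det_updateCol_one_sub_vecMulVec_single [CommRing R] (j : n) (v f : n → R)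
    (hv : v j = 0) :
    ((1 - vecMulVec (Pi.single j 1) v).updateCol j f).det = f j + v ⬝ᵥ f := by
  set M : Matrix n n R := 1 - vecMulVec (Pi.single j 1) v with hM_def
  set x : n → R := f + (v ⬝ᵥ f) • Pi.single j 1
  have hM : M.det = 1 := by
    rw [hM_def, vecMulVec_eq Unit, det_one_sub_mul_comm, replicateRow_mul_replicateCol]
    simp [hv]
  have hx : M *ᵥ x = f := by
    simp [x, hM_def, sub_mulVec, vecMulVec_mulVec, dotProduct_add, hv]
  calc (M.updateCol j f).det = (M.updateCol j (M *ᵥ x)).det := by rw [hx]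
    _ = x j := by rw [det_updateCol_mulVec, hM, one_mul]
    _ = f j + v ⬝ᵥ f := by simp [x]

theorem abs_det_eq_of_forall_col_eq_or_eq_neg
    [CommRing R] [LinearOrder R] [IsStrictOrderedRing R]
    {A B : Matrix n n R} (h : ∀ j, (∀ i, A i j = B i j) ∨ ∀ i, A i j = -B i j) :
    |A.det| = |B.det| := by
  classical
  let d : n → R := fun j => if ∀ i, A i j = B i j then 1 else -1
  have hA : A = B * diagonal d := by
    ext i j
    rw [mul_diagonal]
    rcases h j with hj | hj
    · simp [d, hj]
    · by_cases hB : ∀ i, A i j = B i j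
      · simp [d, hB]
      · rw [show d j = -1 from if_neg hB, hj, mul_neg_one]
  have hd : ∀ j, |d j| = 1 := fun j => by unfold d; split_ifs <;> simp
  rw [hA, det_mul, det_diagonal, abs_mul, Finset.abs_prod, Finset.prod_eq_one fun j _ => hd j,
    mul_one]

end Matrix

section CliqueExt

variable {r : ℕ} (f : Fin r → ℤ)

theorem cliqueExtMatrix_col_minMax {i j : Fin r} (h : i ≠ j) :
    (∀ k, cliqueExtMatrix r f k (Sum.inr (Sum.inl ⟨(min i j, max i j), min_lt_max.2 h⟩)) =
      (if k = i then 1 else 0) - (if k = j then 1 else 0)) ∨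
    (∀ k, cliqueExtMatrix r f k (Sum.inr (Sum.inl ⟨(min i j, max i j), min_lt_max.2 h⟩)) =
      -((if k = i then 1 else 0) - (if k = j then 1 else 0))) := by
  rcases le_total i j with hij | hji
  · left
    simp [cliqueExtMatrix, min_eq_left hij, max_eq_right hij]
  · right
    simp [cliqueExtMatrix, min_eq_right hji, max_eq_left hji]

theorem exists_abs_det_submatrix_cliqueExtMatrix_eq_abs_sum {S : Finset (Fin r)} {i₀ : Fin r}
    (hi₀ : i₀ ∈ S) :
    ∃ g : Fin r → Fin r ⊕ {p : Fin r × Fin r // p.1 < p.2} ⊕ Unit,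
      |((cliqueExtMatrix r f).submatrix id g).det| = |∑ i ∈ S, f i| := by
  let v : Fin r → ℤ := fun i => if i ∈ S.erase i₀ then 1 else 0
  refine ⟨fun i => if h : i = i₀ then Sum.inr (Sum.inr ())
    else if i ∈ S then Sum.inr (Sum.inl ⟨(min i i₀, max i i₀), min_lt_max.2 h⟩)
    else Sum.inl i, ?_⟩
  have hv : v ⬝ᵥ f = ∑ i ∈ S.erase i₀, f i := by
    simp only [v, dotProduct, boole_mul, Finset.sum_ite_mem, Finset.univ_inter]
  rw [abs_det_eq_of_forall_col_eq_or_eq_neg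
      (B := (1 - vecMulVec (Pi.single i₀ 1) v).updateCol i₀ f),
    det_updateCol_one_sub_vecMulVec_single i₀ v f (by simp [v]), hv, Finset.add_sum_erase S f hi₀]
  intro i
  by_cases h : i = i₀
  · subst h
    left
    simp [cliqueExtMatrix]
  by_cases hS : i ∈ S
  · simpa [h, hS, v, one_apply, vecMulVec_apply, Pi.single_apply]
      using cliqueExtMatrix_col_minMax f h
  · left
    intro k
    simp [cliqueExtMatrix, h, hS, v, one_apply, vecMulVec_apply]

theorem abs_sum_le_of_forall_abs_det_submatrix_le {Δ : ℤ}
    (hmod : ∀ g : Fin r → Fin r ⊕ {p : Fin r × Fin r // p.1 < p.2} ⊕ Unit,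
      |((cliqueExtMatrix r f).submatrix id g).det| ≤ Δ)
    (S : Finset (Fin r)) : |∑ i ∈ S, f i| ≤ Δ := by
  obtain rfl | ⟨i₀, hi₀⟩ := S.eq_empty_or_nonempty
  · simpa using (abs_nonneg _).trans (hmod Sum.inl)
  · obtain ⟨g, hg⟩ := exists_abs_det_submatrix_cliqueExtMatrix_eq_abs_sum f hi₀
    exact hg ▸ hmod g

end CliqueExt

theorem Finset.sum_max_zero_eq_sum_filter_pos {ι α : Type*} [AddCommMonoid α] [LinearOrder α]
    (s : Finset ι) (f : ι → α) :
    ∑ i ∈ s, max (f i) 0 = ∑ i ∈ s with 0 < f i, f i := by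
  rw [Finset.sum_filter]
  refine Finset.sum_congr rfl fun i _ => ?_
  rcases lt_or_ge 0 (f i) with h | h
  · rw [if_pos h, max_eq_left h.le]
  · rw [if_neg h.not_gt, max_eq_right h]

theorem pos_neg_entries_sum_le_of_deltaModular_general (Δ : ℤ) (r : ℕ)
    (f : Fin r → ℤ)
    (hmod : ∀ g : Fin r → (Fin r ⊕ {p : Fin r × Fin r // p.1 < p.2} ⊕ Unit),
      |((cliqueExtMatrix r f).submatrix id g).det| ≤ Δ) :
    (∑ i, max (f i) 0 ≤ Δ) ∧ (∑ i, max (-(f i)) 0 ≤ Δ) := by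
  have key := abs_sum_le_of_forall_abs_det_submatrix_le f hmod
  constructor
  · rw [Finset.sum_max_zero_eq_sum_filter_pos]
    exact (le_abs_self _).trans (key _)
  · rw [Finset.sum_max_zero_eq_sum_filter_pos, Finset.sum_neg_distrib]
    exact (neg_le_abs _).trans (key _)

/-- If `[I_r | D_r | f]` is `Δ`-modular, then the positive entries of `f` sum to at most `Δ`
and the absolute values of the negative entries of `f` sum to at most `Δ`. -/
theorem pos_neg_entries_sum_le_of_deltaModular (Δ : ℤ) (hΔ : 1 ≤ Δ) (r : ℕ) (hr : 1 ≤ r)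
    (f : Fin r → ℤ)
    (hmod : ∀ g : Fin r → (Fin r ⊕ {p : Fin r × Fin r // p.1 < p.2} ⊕ Unit),
      |((cliqueExtMatrix r f).submatrix id g).det| ≤ Δ) :
    (∑ i, max (f i) 0 ≤ Δ) ∧ (∑ i, max (-(f i)) 0 ≤ Δ) :=
  pos_neg_entries_sum_le_of_deltaModular_general Δ r f hmod
end

section
/- Let Δ ≥ 1, r ≥ 1 and f ∈ ℤ^r such that the matrix [I_r | D_r | f] is Δ-modular, where D_r has columns e_i − e_j for 1 ≤ i < j ≤ r. Then f can be written as an integer linear combination of at most Δ columns of [I_r | D_r]. -/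
open Finset Matrix

theorem Matrix.det_updateCol_mulVec_s11 {n R : Type*} [Fintype n] [DecidableEq n] [CommRing R]
    (M : Matrix n n R) (k : n) (x : n → R) :
    (M.updateCol k (M *ᵥ x)).det = x k * M.det := by
  rw [← cramer_apply, cramer_eq_adjugate_mulVec, mulVec_mulVec, adjugate_mul, smul_mulVec,
    one_mulVec, Pi.smul_apply, smul_eq_mul, mul_comm]

theorem Matrix.submatrix_update_eq_updateCol {m n o R : Type*} [DecidableEq o]
    (A : Matrix m n R) (g : o → n) (k : o) (c : n) :
    A.submatrix id (Function.update g k c) = (A.submatrix id g).updateCol k (fun i => A i c) := by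
  ext i j
  rcases eq_or_ne j k with rfl | hj <;> simp [*]

namespace cliqueExtMatrix

variable {r : ℕ}

def diffCols (k : Fin r) (T : Finset (Fin r)) :
    Fin r → Fin r ⊕ {p : Fin r × Fin r // p.1 < p.2} ⊕ Unit :=
  fun j => if h : j ∈ T ∧ j < k then Sum.inr (Sum.inl ⟨(j, k), h.2⟩) else Sum.inl j

theorem submatrix_diffCols_apply (f : Fin r → ℤ) (k : Fin r) (T : Finset (Fin r)) (i j : Fin r) :
    (cliqueExtMatrix r f).submatrix id (diffCols k T) i j =
      (if i = j then 1 else 0) - if i = k ∧ j ∈ T ∧ j < k then 1 else 0 := by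
  simp only [Matrix.submatrix_apply, id, diffCols]
  by_cases h : j ∈ T ∧ j < k
  · rw [dif_pos h]
    have := h.2.ne
    by_cases hij : i = j <;> by_cases hik : i = k <;> simp_all [cliqueExtMatrix]
  · rw [dif_neg h, if_neg (show ¬(i = k ∧ j ∈ T ∧ j < k) from fun h' => h h'.2), sub_zero]
    simp [cliqueExtMatrix]

theorem det_submatrix_diffCols (f : Fin r → ℤ) (k : Fin r) (T : Finset (Fin r)) :
    ((cliqueExtMatrix r f).submatrix id (diffCols k T)).det = 1 := by
  rw [Matrix.det_of_isLowerTriangular]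
  · refine Finset.prod_eq_one fun i _ => ?_
    rw [submatrix_diffCols_apply, if_pos rfl, if_neg fun h => h.2.2.ne h.1, sub_zero]
  · intro i j hij
    simp only [submatrix_diffCols_apply]
    have : i < j := hij
    split_ifs <;> omega

theorem submatrix_diffCols_mulVec (f : Fin r → ℤ) (k : Fin r) (T : Finset (Fin r))
    (x : Fin r → ℤ) :
    (cliqueExtMatrix r f).submatrix id (diffCols k T) *ᵥ x =
      x - Pi.single k (∑ j ∈ T with j < k, x j) := by
  ext i
  simp only [mulVec, dotProduct, submatrix_diffCols_apply, sub_mul, Finset.sum_sub_distrib]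
  simp [Pi.single_apply, ite_and, Finset.sum_filter]

theorem det_submatrix_update_diffCols (f : Fin r → ℤ) (k : Fin r) (T : Finset (Fin r)) :
    ((cliqueExtMatrix r f).submatrix id
      (Function.update (diffCols k T) k (Sum.inr (Sum.inr ())))).det =
      f k + ∑ j ∈ T with j < k, f j := by
  set M := (cliqueExtMatrix r f).submatrix id (diffCols k T)
  set x := f + Pi.single k (∑ j ∈ T with j < k, f j)
  have hx : ∑ j ∈ T with j < k, x j = ∑ j ∈ T with j < k, f j :=
    Finset.sum_congr rfl fun j hj => by simp [x, (Finset.mem_filter.mp hj).2.ne]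
  have hMx : M *ᵥ x = f := by
    rw [submatrix_diffCols_mulVec, hx]
    exact add_sub_cancel_right f _
  rw [Matrix.submatrix_update_eq_updateCol]
  change (M.updateCol k f).det = _
  conv_lhs => rw [← hMx]
  rw [Matrix.det_updateCol_mulVec_s11, det_submatrix_diffCols, mul_one]
  simp [x]

theorem abs_sum_le_of_forall_abs_det_le {f : Fin r → ℤ} {Δ : ℤ}
    (hmod : ∀ g : Fin r → (Fin r ⊕ {p : Fin r × Fin r // p.1 < p.2} ⊕ Unit),
      |((cliqueExtMatrix r f).submatrix id g).det| ≤ Δ)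
    (S : Finset (Fin r)) : |∑ i ∈ S, f i| ≤ Δ := by
  rcases S.eq_empty_or_nonempty with rfl | hS
  · simpa using (abs_nonneg _).trans (hmod fun _ => Sum.inr (Sum.inr ()))
  set k := S.max' hS
  have hfilter : S.filter (· < k) = S.erase k := by
    ext j
    simp only [Finset.mem_filter, Finset.mem_erase]
    exact ⟨fun h => ⟨h.2.ne, h.1⟩, fun h => ⟨h.2, (S.le_max' j h.2).lt_of_ne h.1⟩⟩
  have hdet := det_submatrix_update_diffCols f k S
  rw [hfilter, Finset.add_sum_erase S f (S.max'_mem hS)] at hdet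
  exact hdet ▸ hmod _

end cliqueExtMatrix

section

variable {ι : Type*} [Fintype ι]

def posPartSum (f : ι → ℤ) : ℕ := ∑ i, (f i).toNat

theorem posPartSum_eq_zero_iff {f : ι → ℤ} : posPartSum f = 0 ↔ ∀ i, f i ≤ 0 := by
  simp [posPartSum, Finset.sum_eq_zero_iff]

theorem eq_zero_of_posPartSum_eq_zero {f : ι → ℤ} (hpos : posPartSum f = 0)
    (hneg : posPartSum (-f) = 0) : f = 0 := funext fun i => by
  have := posPartSum_eq_zero_iff.mp hpos i
  have := posPartSum_eq_zero_iff.mp hneg i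
  simp only [Pi.neg_apply, Pi.zero_apply] at *
  omega

theorem posPartSum_le_of_forall_sum_le {f : ι → ℤ} {n : ℕ}
    (h : ∀ S : Finset ι, ∑ i ∈ S, f i ≤ n) : posPartSum f ≤ n := by
  have hP : (posPartSum f : ℤ) = ∑ i with 0 < f i, f i := by
    rw [Finset.sum_filter, posPartSum, Nat.cast_sum]
    exact Finset.sum_congr rfl fun i _ => by split_ifs <;> omega
  exact_mod_cast hP ▸ h _

theorem posPartSum_sub_single_lt [DecidableEq ι] {f : ι → ℤ} {i : ι} (hi : 0 < f i) :
    posPartSum (f - Pi.single i 1) < posPartSum f :=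
  Finset.sum_lt_sum (fun m _ => by simp only [Pi.sub_apply, Pi.single_apply]; split_ifs <;> omega)
    ⟨i, mem_univ i, by simp only [Pi.sub_apply, Pi.single_eq_same]; omega⟩

theorem posPartSum_add_single [DecidableEq ι] {f : ι → ℤ} {j : ι} (hj : f j < 0) :
    posPartSum (f + Pi.single j 1) = posPartSum f :=
  Finset.sum_congr rfl fun m _ => by
    rcases eq_or_ne m j with rfl | hm
    · simp only [Pi.add_apply, Pi.single_eq_same]; omega
    · simp [hm]

end

section

variable {ι : Type*} [LinearOrder ι]

def IsCliqueColumn (v : ι → ℤ) : Prop :=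
  (∃ i, v = Pi.single i 1) ∨ ∃ i j, i < j ∧ v = Pi.single i 1 - Pi.single j 1

theorem exists_isCliqueColumn_mem_span {i j : ι} (hij : i ≠ j) :
    ∃ c : ι → ℤ, IsCliqueColumn c ∧ Pi.single i 1 - Pi.single j 1 ∈ Submodule.span ℤ {c} := by
  rcases hij.lt_or_gt with h | h
  · exact ⟨_, Or.inr ⟨i, j, h, rfl⟩, Submodule.mem_span_singleton_self _⟩
  · exact ⟨_, Or.inr ⟨j, i, h, rfl⟩, Submodule.mem_span_singleton.mpr ⟨-1, by simp⟩⟩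

def SpannedByCliqueColumns (n : ℕ) (f : ι → ℤ) : Prop :=
  ∃ s : Finset (ι → ℤ), #s ≤ n ∧ (∀ v ∈ s, IsCliqueColumn v) ∧
    f ∈ Submodule.span ℤ (s : Set (ι → ℤ))

namespace SpannedByCliqueColumns

theorem zero (n : ℕ) : SpannedByCliqueColumns n (0 : ι → ℤ) :=
  ⟨∅, by simp, by simp, zero_mem _⟩

theorem neg {n : ℕ} {f : ι → ℤ} (hf : SpannedByCliqueColumns n (-f)) :
    SpannedByCliqueColumns n f := by
  obtain ⟨s, hcard, hcol, hspan⟩ := hf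
  exact ⟨s, hcard, hcol, by simpa using neg_mem hspan⟩

theorem add {n : ℕ} {f v c : ι → ℤ} (hf : SpannedByCliqueColumns n f) (hc : IsCliqueColumn c)
    (hv : v ∈ Submodule.span ℤ {c}) : SpannedByCliqueColumns (n + 1) (f + v) := by
  classical
  obtain ⟨s, hcard, hcol, hspan⟩ := hf
  refine ⟨insert c s, (card_insert_le c s).trans (by omega),
    forall_mem_insert _ _ _ |>.mpr ⟨hc, hcol⟩, add_mem ?_ ?_⟩
  · exact Submodule.span_mono (by simp [Set.subset_insert]) hspan
  · exact Submodule.span_mono (by simp) hv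

end SpannedByCliqueColumns

theorem exists_mem_span_isCliqueColumn_posPartSum_sub_lt [Fintype ι] {f : ι → ℤ} {i : ι}
    (hi : 0 < f i) : ∃ v c : ι → ℤ, IsCliqueColumn c ∧ v ∈ Submodule.span ℤ {c} ∧
      posPartSum (f - v) < posPartSum f ∧
      (posPartSum (-(f - v)) < posPartSum (-f) ∨ posPartSum (-(f - v)) = 0) := by
  by_cases hn : ∃ j, f j < 0
  · obtain ⟨j, hj⟩ := hn
    have hij : i ≠ j := by rintro rfl; omega
    obtain ⟨c, hc, hv⟩ := exists_isCliqueColumn_mem_span hij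
    refine ⟨_, c, hc, hv, ?_, Or.inl ?_⟩
    · rw [show f - (Pi.single i 1 - Pi.single j 1) = f - Pi.single i 1 + Pi.single j 1 by abel,
        posPartSum_add_single (by simpa [hij.symm] using hj)]
      exact posPartSum_sub_single_lt hi
    · rw [show -(f - (Pi.single i 1 - Pi.single j 1)) = -f - Pi.single j 1 + Pi.single i 1 by
        abel, posPartSum_add_single (by simpa [hij] using hi)]
      exact posPartSum_sub_single_lt (by simpa using hj)
  · have hf : posPartSum (-f) = 0 :=
      posPartSum_eq_zero_iff.mpr fun m => by simpa using not_exists.mp hn m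
    refine ⟨_, _, Or.inl ⟨i, rfl⟩, Submodule.mem_span_singleton_self _,
      posPartSum_sub_single_lt hi, Or.inr ?_⟩
    rw [neg_sub', sub_neg_eq_add, posPartSum_add_single (by simpa using hi), hf]

theorem spannedByCliqueColumns_of_posPartSum_le [Fintype ι] {n : ℕ} {f : ι → ℤ}
    (hpos : posPartSum f ≤ n) (hneg : posPartSum (-f) ≤ n) : SpannedByCliqueColumns n f := by
  induction n generalizing f with
  | zero =>
    rw [eq_zero_of_posPartSum_eq_zero (Nat.le_zero.mp hpos) (Nat.le_zero.mp hneg)]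
    exact .zero 0
  | succ n ih =>
    suffices key : ∀ f : ι → ℤ, (∃ i, 0 < f i) → posPartSum f ≤ n + 1 →
        posPartSum (-f) ≤ n + 1 → SpannedByCliqueColumns (n + 1) f by
      by_cases hp : ∃ i, 0 < f i
      · exact key f hp hpos hneg
      by_cases hn : ∃ i, 0 < (-f) i
      · exact .neg (key (-f) hn hneg (by simpa using hpos))
      rw [eq_zero_of_posPartSum_eq_zero
        (posPartSum_eq_zero_iff.mpr fun i => not_lt.mp fun h => hp ⟨i, h⟩)
        (posPartSum_eq_zero_iff.mpr fun i => not_lt.mp fun h => hn ⟨i, h⟩)]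
      exact .zero _
    rintro f ⟨i, hi⟩ hpos hneg
    obtain ⟨v, c, hc, hv, hvpos, hvneg⟩ := exists_mem_span_isCliqueColumn_posPartSum_sub_lt hi
    simpa using (ih (f := f - v) (by omega) (by omega)).add hc hv

end

theorem spanned_by_delta_columns_of_deltaModular_general (Δ : ℕ) (r : ℕ)
    (f : Fin r → ℤ)
    (hmod : ∀ g : Fin r → (Fin r ⊕ {p : Fin r × Fin r // p.1 < p.2} ⊕ Unit),
      |((cliqueExtMatrix r f).submatrix id g).det| ≤ (Δ : ℤ)) :
    ∃ (s : Finset (Fin r → ℤ)) (c : (Fin r → ℤ) → ℤ),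
      s.card ≤ Δ ∧
      (∀ v ∈ s, (∃ i : Fin r, v = Pi.single i 1) ∨
        (∃ i j : Fin r, i < j ∧ v = Pi.single i 1 - Pi.single j 1)) ∧
      f = ∑ v ∈ s, c v • v := by
  have hsum := cliqueExtMatrix.abs_sum_le_of_forall_abs_det_le hmod
  have hpos : posPartSum f ≤ Δ :=
    posPartSum_le_of_forall_sum_le fun S => (le_abs_self _).trans (hsum S)
  have hneg : posPartSum (-f) ≤ Δ := posPartSum_le_of_forall_sum_le fun S => by
    simpa using (neg_le_abs _).trans (hsum S)
  obtain ⟨s, hcard, hcol, hspan⟩ := spannedByCliqueColumns_of_posPartSum_le hpos hneg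
  obtain ⟨c, -, hc⟩ := Submodule.mem_span_finset.mp hspan
  exact ⟨s, c, hcard, hcol, hc.symm⟩

/-- If `[I_r | D_r | f]` is `Δ`-modular, then `f` is an integer linear combination of at most
`Δ` columns of `[I_r | D_r]`, i.e. of vectors of the form `eᵢ` or `eᵢ − eⱼ`. -/
theorem spanned_by_delta_columns_of_deltaModular (Δ : ℕ) (hΔ : 1 ≤ Δ) (r : ℕ) (hr : 1 ≤ r)
    (f : Fin r → ℤ)
    (hmod : ∀ g : Fin r → (Fin r ⊕ {p : Fin r × Fin r // p.1 < p.2} ⊕ Unit),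
      |((cliqueExtMatrix r f).submatrix id g).det| ≤ (Δ : ℤ)) :
    ∃ (s : Finset (Fin r → ℤ)) (c : (Fin r → ℤ) → ℤ),
      s.card ≤ Δ ∧
      (∀ v ∈ s, (∃ i : Fin r, v = Pi.single i 1) ∨
        (∃ i j : Fin r, i < j ∧ v = Pi.single i 1 - Pi.single j 1)) ∧
      f = ∑ v ∈ s, c v • v :=
  spanned_by_delta_columns_of_deltaModular_general Δ r f hmod
end

section
/- For each positive integer Δ and each r ≥ 1, the matrix [I_r | D_r | f] is Δ-modular where f ∈ ℤ^r has exactly Δ entries equal to 1, exactly Δ entries equal to −1, and all other entries 0 (assuming r ≥ 2Δ), and f is not in the integer span of any set of fewer than Δ columns of [I_r | D_r]. -/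
open Finset Matrix

/-- Entries in `{-1, 0, 1}`, at most one `1` and at most one `-1`: the columns of the incidence
matrix of a directed graph, with some rows (vertices) deleted. -/
def IsArcVector {n : Type*} (v : n → ℤ) : Prop :=
  (∀ i, |v i| ≤ 1) ∧ {i | v i = 1}.Subsingleton ∧ {i | v i = -1}.Subsingleton

namespace IsArcVector

variable {n : Type*} {v : n → ℤ}

theorem comp (hv : IsArcVector v) {m : Type*} {e : m → n} (he : Function.Injective e) :
    IsArcVector (v ∘ e) :=
  ⟨fun i => hv.1 (e i), hv.2.1.preimage he, hv.2.2.preimage he⟩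

theorem eq_one_or_eq_neg_one (hv : IsArcVector v) {i : n} (hi : v i ≠ 0) :
    v i = 1 ∨ v i = -1 := by
  have := abs_le.mp (hv.1 i)
  omega

theorem sum_eq_zero [Fintype n] (hv : IsArcVector v) {i j : n} (hij : i ≠ j) (hi : v i ≠ 0)
    (hj : v j ≠ 0) : ∑ k, v k = 0 := by
  wlog hi1 : v i = 1 generalizing i j
  · have hi' : v i = -1 := (hv.eq_one_or_eq_neg_one hi).resolve_left hi1
    have hj1 : v j = 1 :=
      (hv.eq_one_or_eq_neg_one hj).resolve_right fun hj' => hij (hv.2.2 hi' hj')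
    exact this hij.symm hj hi hj1
  have hj1 : v j = -1 :=
    (hv.eq_one_or_eq_neg_one hj).resolve_left fun hj' => hij (hv.2.1 hi1 hj')
  rw [Fintype.sum_eq_add i j hij, hi1, hj1, add_neg_cancel]
  rintro k ⟨hki, hkj⟩
  by_contra hk
  rcases hv.eq_one_or_eq_neg_one hk with hk1 | hk1
  exacts [hki (hv.2.1 hk1 hi1), hkj (hv.2.2 hk1 hj1)]

theorem card_support_le_two [Fintype n] (hv : IsArcVector v) : #{i | v i ≠ 0} ≤ 2 := by
  classical
  calc #{i | v i ≠ 0} ≤ #(({i | v i = 1} : Finset n) ∪ ({i | v i = -1} : Finset n)) :=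
        card_le_card fun i hi => by
          simpa [← filter_or] using hv.eq_one_or_eq_neg_one (mem_filter.mp hi).2
    _ ≤ #{i | v i = 1} + #{i | v i = -1} := card_union_le _ _
    _ ≤ 1 + 1 := by
        gcongr <;> refine card_le_one.mpr fun a ha b hb => ?_ <;> simp only [mem_filter] at ha hb
        exacts [hv.2.1 ha.2 hb.2, hv.2.2 ha.2 hb.2]

end IsArcVector

theorem isArcVector_single {n : Type*} [DecidableEq n] (a : n) :
    IsArcVector (Pi.single a 1 : n → ℤ) := by
  refine ⟨fun i => ?_, fun x hx y hy => ?_, fun x hx y hy => ?_⟩ <;>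
    simp only [Set.mem_ofPred_eq, Pi.single_apply] at * <;> split_ifs at * <;> simp_all

theorem isArcVector_single_sub_single {n : Type*} [DecidableEq n] (a b : n) :
    IsArcVector (Pi.single a 1 - Pi.single b 1 : n → ℤ) := by
  refine ⟨fun i => ?_, fun x hx y hy => ?_, fun x hx y hy => ?_⟩ <;>
    simp only [Set.mem_ofPred_eq, Pi.sub_apply, Pi.single_apply] at * <;> split_ifs at * <;>
    simp_all

theorem Matrix.det_updateCol_finset_sum {n ι R : Type*} [Fintype n] [DecidableEq n]
    [CommRing R] (M : Matrix n n R) (j : n) (s : Finset ι) (u : ι → n → R) :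
    (M.updateCol j (∑ k ∈ s, u k)).det = ∑ k ∈ s, (M.updateCol j (u k)).det := by
  have hdet (w : n → R) :
      (M.updateCol j w).det = detRowAlternating (Function.update Mᵀ j w) := by
    rw [← det_transpose, ← updateRow_transpose]; rfl
  simp only [hdet]
  exact (detRowAlternating : (n → R) [⋀^n]→ₗ[R] R).map_update_sum s j u Mᵀ

theorem abs_det_le_one_of_isArcVector {n : ℕ} (A : Matrix (Fin n) (Fin n) ℤ)
    (hA : ∀ j, IsArcVector (Aᵀ j)) : |A.det| ≤ 1 := by
  induction n with
  | zero => simp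
  | succ n ih =>
    by_cases hsparse : ∃ j i₀, ∀ i ≠ i₀, A i j = 0
    · obtain ⟨j, i₀, hz⟩ := hsparse
      rw [det_succ_column A j, Finset.sum_eq_single i₀ (fun i _ hi => by simp [hz i hi])
        (by simp), abs_mul, abs_mul, abs_pow, abs_neg, abs_one, one_pow, one_mul]
      exact mul_le_one₀ ((hA j).1 i₀) (abs_nonneg _)
        (ih _ fun j' => (hA (j.succAbove j')).comp (Fin.succAbove_right_injective))
    · push Not at hsparse
      -- every column has two nonzero entries, so the rows sum to zero
      suffices A.det = 0 by simp [this]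
      refine exists_vecMul_eq_zero_iff.mp ⟨1, one_ne_zero, funext fun j => ?_⟩
      obtain ⟨i₁, -, hi₁⟩ := hsparse j 0
      obtain ⟨i₂, hi₂₁, hi₂⟩ := hsparse j i₁
      simpa [vecMul, dotProduct] using (hA j).sum_eq_zero hi₂₁ hi₂ hi₁

theorem abs_det_updateCol_sum_le {n : ℕ} {ι : Type*} [Fintype ι]
    (A : Matrix (Fin n) (Fin n) ℤ) (j₀ : Fin n) (hA : ∀ j ≠ j₀, IsArcVector (Aᵀ j))
    (u : ι → Fin n → ℤ) (hu : ∀ k, IsArcVector (u k)) :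
    |(A.updateCol j₀ (∑ k, u k)).det| ≤ Fintype.card ι := by
  have hterm (k : ι) : |(A.updateCol j₀ (u k)).det| ≤ 1 := by
    refine abs_det_le_one_of_isArcVector _ fun j => ?_
    rw [← updateRow_transpose]
    rcases eq_or_ne j j₀ with rfl | hj
    · rw [updateRow_self]; exact hu k
    · rw [updateRow_ne hj]; exact hA j hj
  calc |(A.updateCol j₀ (∑ k, u k)).det|
      ≤ ∑ k, |(A.updateCol j₀ (u k)).det| := by
        rw [det_updateCol_finset_sum]; exact abs_sum_le_sum_abs _ _
    _ ≤ ∑ _k : ι, 1 := sum_le_sum fun k _ => hterm k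
    _ = Fintype.card ι := by simp

theorem exists_isArcVector_sum_eq {n : Type*} [Fintype n] [DecidableEq n] (v : n → ℤ)
    (hv : ∀ i, v i = 1 ∨ v i = -1 ∨ v i = 0) (hcard : #{i | v i = 1} = #{i | v i = -1}) :
    ∃ u : {i // v i = 1} → n → ℤ, (∀ k, IsArcVector (u k)) ∧ v = ∑ k, u k := by
  have σ : {i // v i = 1} ≃ {i // v i = -1} :=
    Fintype.equivOfCardEq (by simpa [Fintype.card_subtype] using hcard)
  refine ⟨fun k => Pi.single (k : n) 1 - Pi.single (σ k : n) 1,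
    fun k => isArcVector_single_sub_single _ _, ?_⟩
  have hind (c : ℤ) (i : n) :
      ∑ m : {i // v i = c}, (Pi.single (m : n) 1 : n → ℤ) i = if v i = c then 1 else 0 := by
    rw [← Finset.sum_subtype {x | v x = c} (by simp) fun x => (Pi.single x 1 : n → ℤ) i]
    simp [Pi.single_apply]
  funext i
  simp only [Finset.sum_apply, Pi.sub_apply, sum_sub_distrib]
  rw [Fintype.sum_equiv σ _ (fun m => (Pi.single (m : n) 1 : n → ℤ) i) fun _ => rfl,
    hind, hind]
  rcases hv i with h | h | h <;> simp [h]

theorem isArcVector_cliqueExtMatrix_col {r : ℕ} {f : Fin r → ℤ}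
    {j : Fin r ⊕ {p : Fin r × Fin r // p.1 < p.2} ⊕ Unit} (hj : j ≠ Sum.inr (Sum.inr ())) :
    IsArcVector ((cliqueExtMatrix r f)ᵀ j) := by
  rcases j with k | p | ⟨⟨⟩⟩
  · convert isArcVector_single k using 1
    funext i; simp [cliqueExtMatrix, Pi.single_apply]
  · convert isArcVector_single_sub_single p.1.1 p.1.2 using 1
    funext i; simp [cliqueExtMatrix, Pi.single_apply]
  · exact absurd rfl hj

theorem abs_det_cliqueExtMatrix_submatrix_le {Δ r : ℕ} (hΔ : 1 ≤ Δ) {f : Fin r → ℤ}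
    (hvals : ∀ i, f i = 1 ∨ f i = -1 ∨ f i = 0) (hones : #{i | f i = 1} = Δ)
    (hminus : #{i | f i = -1} = Δ)
    (g : Fin r → Fin r ⊕ {p : Fin r × Fin r // p.1 < p.2} ⊕ Unit) :
    |((cliqueExtMatrix r f).submatrix id g).det| ≤ Δ := by
  set B := (cliqueExtMatrix r f).submatrix id g
  by_cases hf : ∃ j₀, g j₀ = Sum.inr (Sum.inr ())
  · obtain ⟨j₀, hj₀⟩ := hf
    by_cases hdup : ∃ j ≠ j₀, g j = Sum.inr (Sum.inr ())
    · obtain ⟨j, hj, hgj⟩ := hdup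
      rw [det_zero_of_column_eq hj fun i => by simp [B, hgj, hj₀]]
      positivity
    push Not at hdup
    obtain ⟨u, hu, hfu⟩ := exists_isArcVector_sum_eq f hvals (hones.trans hminus.symm)
    have hB : B = B.updateCol j₀ (∑ k, u k) := by
      rw [← hfu]; ext i j
      rcases eq_or_ne j j₀ with rfl | hj
      · simp [B, hj₀, cliqueExtMatrix]
      · rw [updateCol_ne hj]
    calc |B.det| = |(B.updateCol j₀ (∑ k, u k)).det| := by rw [← hB]
      _ ≤ Fintype.card {i // f i = 1} :=
        abs_det_updateCol_sum_le B j₀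
          (fun j hj => isArcVector_cliqueExtMatrix_col (hdup j hj)) u hu
      _ = Δ := by rw [Fintype.card_subtype, hones]
  · push Not at hf
    calc |B.det| ≤ 1 :=
          abs_det_le_one_of_isArcVector B fun j => isArcVector_cliqueExtMatrix_col (hf j)
      _ ≤ Δ := by exact_mod_cast hΔ

theorem card_support_sum_smul_le {n R : Type*} [Fintype n] [DecidableEq n] [Semiring R]
    [DecidableEq R] (s : Finset (n → R)) (c : (n → R) → R) {k : ℕ}
    (hs : ∀ v ∈ s, #{i | v i ≠ 0} ≤ k) :
    #{i | (∑ v ∈ s, c v • v) i ≠ 0} ≤ k * #s :=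
  calc #{i | (∑ v ∈ s, c v • v) i ≠ 0}
    _ ≤ #(s.biUnion fun v => {i | v i ≠ 0}) := by
        refine card_le_card fun i hi => ?_
        rw [mem_filter, Finset.sum_apply] at hi
        obtain ⟨v, hv, hvi⟩ := exists_ne_zero_of_sum_ne_zero hi.2
        exact mem_biUnion.mpr ⟨v, hv, by simpa using fun h => hvi (by simp [h])⟩
    _ ≤ ∑ v ∈ s, #{i | v i ≠ 0} := card_biUnion_le
    _ ≤ ∑ _v ∈ s, k := sum_le_sum hs
    _ = k * #s := by rw [sum_const, smul_eq_mul, mul_comm]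

theorem le_card_of_eq_sum_smul_isArcVector {n : Type*} [Fintype n] [DecidableEq n] {Δ : ℕ}
    {f : n → ℤ} (hones : #{i | f i = 1} = Δ) (hminus : #{i | f i = -1} = Δ)
    {s : Finset (n → ℤ)} (hs : ∀ v ∈ s, IsArcVector v) (c : (n → ℤ) → ℤ)
    (hf : f = ∑ v ∈ s, c v • v) : Δ ≤ #s := by
  have hsupp : 2 * Δ ≤ #{i | f i ≠ 0} :=
    calc 2 * Δ = #(({i | f i = 1} : Finset n) ∪ ({i | f i = -1} : Finset n)) := by
          rw [card_union_of_disjoint (disjoint_filter.mpr fun i _ h => by omega), hones, hminus]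
          ring
      _ ≤ #{i | f i ≠ 0} := card_le_card fun i => by
          simp only [mem_union, mem_filter, mem_univ, true_and]; omega
  have := hf ▸ card_support_sum_smul_le s c fun v hv => (hs v hv).card_support_le_two
  omega

theorem tight_single_element_extension_general (Δ : ℕ) (hΔ : 1 ≤ Δ) (r : ℕ)
    (f : Fin r → ℤ)
    (hones : (Finset.univ.filter fun i => f i = 1).card = Δ)
    (hminus : (Finset.univ.filter fun i => f i = -1).card = Δ)
    (hvals : ∀ i, f i = 1 ∨ f i = -1 ∨ f i = 0) :
    (∀ g : Fin r → (Fin r ⊕ {p : Fin r × Fin r // p.1 < p.2} ⊕ Unit),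
      |((cliqueExtMatrix r f).submatrix id g).det| ≤ (Δ : ℤ)) ∧
    ¬ ∃ (s : Finset (Fin r → ℤ)) (c : (Fin r → ℤ) → ℤ),
        s.card < Δ ∧
        (∀ v ∈ s, (∃ i : Fin r, v = Pi.single i 1) ∨
          (∃ i j : Fin r, i < j ∧ v = Pi.single i 1 - Pi.single j 1)) ∧
        f = ∑ v ∈ s, c v • v := by
  refine ⟨abs_det_cliqueExtMatrix_submatrix_le hΔ hvals hones hminus, ?_⟩
  rintro ⟨s, c, hcard, hs, hf⟩
  have hsArc (v) (hv : v ∈ s) : IsArcVector v := by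
    rcases hs v hv with ⟨i, rfl⟩ | ⟨i, j, -, rfl⟩
    exacts [isArcVector_single i, isArcVector_single_sub_single i j]
  exact hcard.not_ge (le_card_of_eq_sum_smul_isArcVector hones hminus hsArc c hf)

/-- If `f` has exactly `Δ` entries `1`, exactly `Δ` entries `−1` and all other entries `0`
(with `r ≥ 2Δ`), then `[I_r | D_r | f]` is `Δ`-modular, and `f` is not an integer linear
combination of fewer than `Δ` columns of `[I_r | D_r]`. -/
theorem tight_single_element_extension (Δ : ℕ) (hΔ : 1 ≤ Δ) (r : ℕ) (hr : 2 * Δ ≤ r)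
    (f : Fin r → ℤ)
    (hones : (Finset.univ.filter fun i => f i = 1).card = Δ)
    (hminus : (Finset.univ.filter fun i => f i = -1).card = Δ)
    (hvals : ∀ i, f i = 1 ∨ f i = -1 ∨ f i = 0) :
    (∀ g : Fin r → (Fin r ⊕ {p : Fin r × Fin r // p.1 < p.2} ⊕ Unit),
      |((cliqueExtMatrix r f).submatrix id g).det| ≤ (Δ : ℤ)) ∧
    ¬ ∃ (s : Finset (Fin r → ℤ)) (c : (Fin r → ℤ) → ℤ),
        s.card < Δ ∧
        (∀ v ∈ s, (∃ i : Fin r, v = Pi.single i 1) ∨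
          (∃ i j : Fin r, i < j ∧ v = Pi.single i 1 - Pi.single j 1)) ∧
        f = ∑ v ∈ s, c v • v :=
  tight_single_element_extension_general Δ hΔ r f hones hminus hvals
end

section
/- Let Δ ≥ 1 and let A be a 2×n integer matrix of rank 2 that is Δ-modular. If p is a prime with p > Δ, then A has at most p + 1 pairwise non-parallel nonzero columns. -/
/-- If a rank-2 `Δ`-modular integer matrix has a set of nonzero, pairwise non-parallel
columns and `p` is a prime with `p > Δ`, then that set has at most `p + 1` elements. -/
theorem rank_two_columns_le_prime_succ (Δ : ℤ) (hΔ : 1 ≤ Δ) (n : ℕ)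
    (A : Matrix (Fin 2) (Fin n) ℤ) (hrank : A.rank = 2)
    (hmod : ∀ (f : Fin 2 → Fin 2) (g : Fin 2 → Fin n), |(A.submatrix f g).det| ≤ Δ)
    (p : ℕ) (hp : p.Prime) (hpΔ : Δ < (p : ℤ))
    (s : Finset (Fin n))
    (hnz : ∀ j ∈ s, (fun i => A i j) ≠ 0)
    (hpar : ∀ j ∈ s, ∀ k ∈ s, j ≠ k → A 0 j * A 1 k - A 0 k * A 1 j ≠ 0) :
    s.card ≤ p + 1 := by
  haveI : Fact p.Prime := ⟨hp⟩
  -- key: determinants of distinct columns in s are nonzero mod p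
  have key : ∀ j ∈ s, ∀ k ∈ s, j ≠ k →
      ((A 0 j * A 1 k - A 0 k * A 1 j : ℤ) : ZMod p) ≠ 0 := by
    intro j hj k hk hjk h0
    set d : ℤ := A 0 j * A 1 k - A 0 k * A 1 j with hd
    have hdne : d ≠ 0 := hpar j hj k hk hjk
    have hdvd : (p : ℤ) ∣ d := (ZMod.intCast_zmod_eq_zero_iff_dvd d p).mp h0
    have hle : (p : ℤ) ≤ |d| := Int.le_of_dvd (abs_pos.mpr hdne) ((dvd_abs _ _).mpr hdvd)
    have hdΔ : |d| ≤ Δ := by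
      have := hmod id ![j, k]
      have hdet : (A.submatrix id ![j, k]).det = d := by
        rw [Matrix.det_fin_two]
        simp [Matrix.submatrix_apply, hd]
      rw [hdet] at this
      exact this
    omega
  -- map to the projective line over ZMod p, encoded as Option (ZMod p)
  classical
  set f : Fin n → Option (ZMod p) := fun j =>
    if ((A 1 j : ℤ) : ZMod p) = 0 then none
    else some (((A 0 j : ℤ) : ZMod p) / ((A 1 j : ℤ) : ZMod p)) with hf
  have hinj : Set.InjOn f s := by
    intro j hj k hk hfeq
    by_contra hjk
    apply key j hj k hk hjk
    by_cases h1j : ((A 1 j : ℤ) : ZMod p) = 0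
    · by_cases h1k : ((A 1 k : ℤ) : ZMod p) = 0
      · push_cast
        rw [h1j, h1k]; ring
      · simp [hf, h1j, h1k] at hfeq
    · by_cases h1k : ((A 1 k : ℤ) : ZMod p) = 0
      · simp [hf, h1j, h1k] at hfeq
      · simp only [hf, h1j, h1k, if_neg, if_false] at hfeq
        rw [Option.some_inj, div_eq_div_iff h1j h1k] at hfeq
        push_cast
        rw [sub_eq_zero]
        linear_combination hfeq
  calc s.card = (s.image f).card := (Finset.card_image_of_injOn hinj).symm
    _ ≤ Fintype.card (Option (ZMod p)) := Finset.card_le_univ _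
    _ = p + 1 := by simp [ZMod.card]
end

section
/- Let Δ ≥ 1. Any 2×n integer matrix whose columns are nonzero and pairwise non-parallel and which is Δ-modular has n ≤ 2Δ + 1. In particular, the uniform matroid U_{2, 2Δ+2} is not representable by a Δ-modular matrix. -/
/-- A `2 × n` integer matrix with nonzero, pairwise non-parallel columns that is `Δ`-modular
(all `2 × 2` subdeterminants bounded by `Δ` in absolute value) has `n ≤ 2Δ + 1`. In
particular, `U_{2, 2Δ+2}` is not representable by a `Δ`-modular matrix. -/
theorem rank_two_columns_le_two_delta_add_one (Δ : ℤ) (hΔ : 1 ≤ Δ) (n : ℕ)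
    (A : Matrix (Fin 2) (Fin n) ℤ)
    (hmod : ∀ (f : Fin 2 → Fin 2) (g : Fin 2 → Fin n), |(A.submatrix f g).det| ≤ Δ)
    (hnz : ∀ j : Fin n, (fun i => A i j) ≠ 0)
    (hpar : ∀ j k : Fin n, j ≠ k → A 0 j * A 1 k - A 0 k * A 1 j ≠ 0) :
    (n : ℤ) ≤ 2 * Δ + 1 := by
  -- By Bertrand's postulate, pick a prime p with Δ < p ≤ 2Δ.
  have hm : Δ.toNat ≠ 0 := by omega
  obtain ⟨p, hp, hlt, hle⟩ := Nat.exists_prime_lt_and_le_two_mul Δ.toNat hm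
  haveI : Fact p.Prime := ⟨hp⟩
  have hΔp : Δ < (p : ℤ) := by omega
  -- Key: for j ≠ k, p does not divide the cross-determinant.
  have key : ∀ j k : Fin n, j ≠ k →
      ((A 0 j * A 1 k - A 0 k * A 1 j : ℤ) : ZMod p) ≠ 0 := by
    intro j k hjk h0
    have hd : A 0 j * A 1 k - A 0 k * A 1 j ≠ 0 := hpar j k hjk
    have hdvd : (p : ℤ) ∣ (A 0 j * A 1 k - A 0 k * A 1 j) :=
      (ZMod.intCast_zmod_eq_zero_iff_dvd _ p).mp h0
    have hb : |A 0 j * A 1 k - A 0 k * A 1 j| ≤ Δ := by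
      have := hmod id ![j, k]
      have hdet : (A.submatrix id ![j, k]).det = A 0 j * A 1 k - A 0 k * A 1 j := by
        rw [Matrix.det_fin_two]
        simp [Matrix.submatrix_apply]
      rwa [hdet] at this
    have : (p : ℤ) ≤ |A 0 j * A 1 k - A 0 k * A 1 j| :=
      Int.le_of_dvd (abs_pos.mpr hd) ((dvd_abs _ _).mpr hdvd)
    omega
  -- Map each column to a point of the projective line over 𝔽_p.
  set x : Fin n → ZMod p := fun j => ((A 0 j : ℤ) : ZMod p) with hx
  set y : Fin n → ZMod p := fun j => ((A 1 j : ℤ) : ZMod p) with hy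
  have keyxy : ∀ j k : Fin n, j ≠ k → x j * y k - x k * y j ≠ 0 := by
    intro j k hjk h0
    apply key j k hjk
    push_cast
    simpa [hx, hy] using h0
  let f : Fin n → Option (ZMod p) := fun j => if y j = 0 then none else some (x j * (y j)⁻¹)
  have hinj : Function.Injective f := by
    intro j k hfjk
    by_contra hjk
    have hk := keyxy j k hjk
    simp only [f] at hfjk
    by_cases hyj : y j = 0 <;> by_cases hyk : y k = 0
    · exact hk (by rw [hyj, hyk]; ring)
    · simp [hyj, hyk] at hfjk
    · simp [hyj, hyk] at hfjk
    · rw [if_neg hyj, if_neg hyk] at hfjk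
      have heq : x j * (y j)⁻¹ = x k * (y k)⁻¹ := Option.some_injective _ hfjk
      apply hk
      field_simp at heq
      rw [sub_eq_zero]
      linear_combination heq
  have hcard : n ≤ p + 1 := by
    have := Fintype.card_le_of_injective f hinj
    simpa [ZMod.card] using this
  have : ((p : ℤ)) ≤ 2 * Δ := by
    have : (p : ℤ) ≤ 2 * Δ.toNat := by exact_mod_cast hle
    omega
  omega
end

section
/- Let M be a finite set of nonzero vectors in ℚ^r, pairwise non-parallel, such that the matroid they represent is a spike of rank r with tip t: the simplification of the contraction by t is a circuit of size r and each parallel class after contracting t has size two. If the vectors are the columns of a Δ-modular integer matrix, then r ≤ 2Δ. -/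
/-!
Each pair spans a plane with the tip `t`, so `y k = a k • x k + b k • t` with `b k ≠ 0`;
swapping the pair if necessary gives `1 ≤ |a k|`. By multilinearity, the maximal minor that takes
`y k` for `k ∈ S` and `x k` otherwise equals `(∏ k ∈ S, a k) * (det X + ∑ k ∈ S, c k)`, where
`c k = b k * T k / a k` and `T k` is the minor with `x k` replaced by `t` (nonzero by the circuit
condition). Integrality and `Δ`-modularity give `∏ k ∈ S, |a k| ≤ Δ` for `S ≠ univ`,
`|det X + ∑ k ∈ S, c k| ≤ Δ / ∏ k ∈ S, |a k|`, and `1 / |a k| ≤ |c k|` for all but one `k`.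
Splitting the `c k` by sign and summing `1 = (1 - 1/|a k|) + (1/|a k| - |c k|) + |c k|` over `k`
then gives `r < 2Δ + 1`.
-/

open Submodule Finset Function

section Numeric

variable {ι K : Type*} [Field K] [LinearOrder K] [IsStrictOrderedRing K] {w c : ι → K} {d Δ : K}

theorem sum_one_sub_inv_add_div_prod_le [DecidableEq ι] (hw : ∀ k, 1 ≤ w k) (S : Finset ι)
    (hprod : ∀ T ⊂ S, ∏ k ∈ T, w k ≤ Δ) :
    ∑ k ∈ S, (1 - (w k)⁻¹) + Δ / ∏ k ∈ S, w k ≤ Δ := by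
  induction S using Finset.induction_on with
  | empty => simp
  | insert m S hm ih =>
    have ih := ih fun T hT => hprod T (hT.trans (ssubset_insert hm))
    have hp : 0 < ∏ k ∈ S, w k := prod_pos fun k _ => one_pos.trans_le (hw k)
    have hq : 1 ≤ Δ / ∏ k ∈ S, w k := (one_le_div hp).2 (hprod S (ssubset_insert hm))
    have hu : 0 ≤ 1 - (w m)⁻¹ := sub_nonneg.2 (inv_le_one_of_one_le₀ (hw m))
    have hsplit : Δ / (w m * ∏ k ∈ S, w k) = (Δ / ∏ k ∈ S, w k) * (w m)⁻¹ := by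
      rw [mul_comm (w m), ← div_div, div_eq_mul_inv]
    rw [sum_insert hm, prod_insert hm, hsplit]
    nlinarith [mul_le_mul_of_nonneg_right hq hu]

theorem exists_sum_abs_le [Fintype ι] [DecidableEq ι] {B : Finset ι → K}
    (h : ∀ S, |d + ∑ k ∈ S, c k| ≤ B S) : ∃ S, ∑ k, |c k| ≤ B S + B Sᶜ := by
  set S := univ.filter (0 < c ·)
  have hS : ∑ k ∈ S, |c k| = ∑ k ∈ S, c k :=
    sum_congr rfl fun k hk => abs_of_pos (mem_filter.1 hk).2
  have hSc : ∑ k ∈ Sᶜ, |c k| = -∑ k ∈ Sᶜ, c k := by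
    rw [← sum_neg_distrib]
    refine sum_congr rfl fun k hk => abs_of_nonpos ?_
    simpa [S] using hk
  refine ⟨S, ?_⟩
  rw [← sum_add_sum_compl S, hS, hSc]
  linarith [(abs_le.1 (h S)).2, (abs_le.1 (h Sᶜ)).1]

theorem card_lt_two_mul_add_one_of_bounds [Fintype ι] [DecidableEq ι] (hw : ∀ k, 1 ≤ w k)
    (hprod : ∀ S ≠ univ, ∏ k ∈ S, w k ≤ Δ)
    (hsum : ∀ S, |d + ∑ k ∈ S, c k| ≤ Δ / ∏ k ∈ S, w k)
    (k₀ : ι) (hc₀ : c k₀ ≠ 0) (hc : ∀ k ≠ k₀, (w k)⁻¹ ≤ |c k|) :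
    (Fintype.card ι : K) < 2 * Δ + 1 := by
  obtain ⟨S, hS⟩ := exists_sum_abs_le hsum
  have hsub (T : Finset ι) := sum_one_sub_inv_add_div_prod_le hw T fun U hU =>
    hprod U (hU.trans_subset (subset_univ T)).ne
  have hrest : ∑ k ∈ univ.erase k₀, ((w k)⁻¹ - |c k|) ≤ 0 :=
    sum_nonpos fun k hk => sub_nonpos.2 (hc k (ne_of_mem_erase hk))
  have hmid : ∑ k, ((w k)⁻¹ - |c k|) < 1 := by
    rw [← add_sum_erase _ _ (mem_univ k₀)]
    linarith [abs_pos.2 hc₀, inv_le_one_of_one_le₀ (hw k₀)]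
  have hcard : (Fintype.card ι : K) = ∑ k ∈ S, (1 - (w k)⁻¹) + ∑ k ∈ Sᶜ, (1 - (w k)⁻¹)
      + ∑ k, ((w k)⁻¹ - |c k|) + ∑ k, |c k| := by
    rw [sum_add_sum_compl, ← sum_add_distrib, ← sum_add_distrib]
    simp
  linarith [hsub S, hsub Sᶜ]

end Numeric

section MaxMinor

variable {ι R : Type*} [CommRing R] {r : ℕ} (col : ι → Fin r → R) {tip : ι}
  {ix iy : Fin r → ι} {a b : Fin r → R}

def maxMinor (g : Fin r → ι) : R := (Matrix.of (col ∘ g)).det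

theorem maxMinor_eq_zero_of_eq {g : Fin r → ι} {j j' : Fin r} (hjj' : j ≠ j') (h : g j = g j') :
    maxMinor col g = 0 :=
  Matrix.det_zero_of_row_eq hjj' (funext fun _ => by simp [h])

theorem maxMinor_update (g : Fin r → ι) (j : Fin r) (v : ι) :
    maxMinor col (update g j v) = ((Matrix.of (col ∘ g)).updateRow j (col v)).det := by
  rw [maxMinor, comp_update]
  rfl

theorem maxMinor_update_of_eq_smul_add_smul {x y t : ι} {α β : R}
    (h : col y = α • col x + β • col t) (g : Fin r → ι) (j : Fin r) :
    maxMinor col (update g j y) =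
      α * maxMinor col (update g j x) + β * maxMinor col (update g j t) := by
  simp only [maxMinor_update, h, Matrix.det_updateRow_add, Matrix.det_updateRow_smul]

theorem maxMinor_update_iy_of_ne (hxy : ∀ k, col (iy k) = a k • col (ix k) + b k • col tip)
    {i k : Fin r} (hik : i ≠ k) :
    maxMinor col (update ix i (iy k)) = b k * maxMinor col (update ix i tip) := by
  rw [maxMinor_update_of_eq_smul_add_smul col (hxy k),
    maxMinor_eq_zero_of_eq col hik (j' := k) (by rw [update_self, update_of_ne hik.symm]),
    mul_zero, zero_add]

theorem maxMinor_update_piecewise_tip [DecidableEq ι]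
    (hxy : ∀ k, col (iy k) = a k • col (ix k) + b k • col tip) (S : Finset (Fin r)) {i : Fin r}
    (hi : i ∉ S) :
    maxMinor col (update (S.piecewise iy ix) i tip) =
      (∏ k ∈ S, a k) * maxMinor col (update ix i tip) := by
  induction S using Finset.induction_on generalizing i with
  | empty => simp
  | insert m S hm ih =>
    obtain ⟨him, hiS⟩ := not_or.1 (mem_insert.not.1 hi)
    have hPm : update (S.piecewise iy ix) i tip m = ix m := by
      rw [update_of_ne (Ne.symm him), piecewise_eq_of_notMem _ _ _ hm]
    rw [piecewise_insert, update_comm (Ne.symm him),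
      maxMinor_update_of_eq_smul_add_smul col (hxy m), ← hPm, update_eq_self,
      maxMinor_eq_zero_of_eq col (g := update (update _ i tip) m tip) (Ne.symm him)
        (by simp [update_of_ne him]),
      ih hiS, prod_insert hm]
    ring

theorem maxMinor_eq_intCast_det {A : Matrix (Fin r) ι ℤ} (hcol : ∀ j i, col j i = (A i j : R))
    (g : Fin r → ι) : maxMinor col g = ((A.submatrix id g).det : R) := by
  rw [maxMinor, Int.cast_det, ← Matrix.det_transpose]
  congr 1
  ext i j
  simp [hcol]

end MaxMinor

section MaxMinorField

variable {ι K : Type*} [Field K] {r : ℕ} (col : ι → Fin r → K) {tip : ι} {ix iy : Fin r → ι}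
  {a b : Fin r → K}

theorem maxMinor_ne_zero_iff (g : Fin r → ι) :
    maxMinor col g ≠ 0 ↔ LinearIndependent K (col ∘ g) := by
  rw [maxMinor, ← isUnit_iff_ne_zero, ← Matrix.isUnit_iff_isUnit_det,
    ← Matrix.linearIndependent_rows_iff_isUnit]
  rfl

theorem maxMinor_piecewise [DecidableEq ι]
    (hxy : ∀ k, col (iy k) = a k • col (ix k) + b k • col tip) (ha : ∀ k, a k ≠ 0)
    (S : Finset (Fin r)) :
    maxMinor col (S.piecewise iy ix) = (∏ k ∈ S, a k) *
      (maxMinor col ix + ∑ k ∈ S, b k * maxMinor col (update ix k tip) / a k) := by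
  induction S using Finset.induction_on with
  | empty => simp
  | insert m S hm ih =>
    rw [piecewise_insert, maxMinor_update_of_eq_smul_add_smul col (hxy m),
      ← piecewise_eq_of_notMem S iy ix hm, update_eq_self,
      maxMinor_update_piecewise_tip col hxy S hm, ih, prod_insert hm, sum_insert hm]
    field_simp [ha m]
    ring

theorem spike_rank_lt_two_mul_add_one [LinearOrder K] [IsStrictOrderedRing K] [NeZero r]
    (hxy : ∀ k, col (iy k) = a k • col (ix k) + b k • col tip)
    (ha : ∀ k, 1 ≤ |a k|) (hb : ∀ k, b k ≠ 0)
    (hT : ∀ i, maxMinor col (update ix i tip) ≠ 0) {Δ : K} (hle : ∀ g, |maxMinor col g| ≤ Δ)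
    (hone : ∀ g, maxMinor col g ≠ 0 → 1 ≤ |maxMinor col g|) :
    (r : K) < 2 * Δ + 1 := by
  classical
  set T := fun i => maxMinor col (update ix i tip)
  have ha₀ (k : Fin r) : a k ≠ 0 := abs_pos.1 (one_pos.trans_le (ha k))
  have hprod_pos (S : Finset (Fin r)) : 0 < ∏ k ∈ S, |a k| :=
    prod_pos fun k _ => abs_pos.2 (ha₀ k)
  -- `k₀` minimises `|T|`, so that `1 ≤ |b k * T k₀| ≤ |b k * T k|` for `k ≠ k₀`
  obtain ⟨k₀, -, hk₀⟩ := exists_min_image univ (fun i => |T i|) univ_nonempty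
  have hcard := card_lt_two_mul_add_one_of_bounds (w := fun k => |a k|) (d := maxMinor col ix)
    (c := fun k => b k * T k / a k) (Δ := Δ) ha ?_ ?_ k₀ ?_ ?_
  · simpa using hcard
  · intro S hS
    obtain ⟨j, hj⟩ := not_forall.1 (mt eq_univ_iff_forall.2 hS)
    have := hle (update (S.piecewise iy ix) j tip)
    rw [maxMinor_update_piecewise_tip col hxy S hj, abs_mul, abs_prod] at this
    nlinarith [hone _ (hT j), hprod_pos S]
  · intro S
    rw [le_div_iff₀ (hprod_pos S), ← abs_prod, ← abs_mul, mul_comm,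
      ← maxMinor_piecewise col hxy ha₀]
    exact hle _
  · exact div_ne_zero (mul_ne_zero (hb k₀) (hT k₀)) (ha₀ k₀)
  · intro k hk
    have hminor := maxMinor_update_iy_of_ne col hxy (Ne.symm hk)
    have h1 : 1 ≤ |b k * T k₀| := hminor ▸ hone _ (hminor ▸ mul_ne_zero (hb k) (hT k₀))
    rw [abs_div, abs_mul, inv_eq_one_div, div_le_div_iff_of_pos_right (abs_pos.2 (ha₀ k))]
    rw [abs_mul] at h1
    nlinarith [hk₀ k (mem_univ k), abs_nonneg (b k)]

end MaxMinorField

section Vectors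

variable {K V : Type*} [Field K] [AddCommGroup V] [Module K V]

theorem span_pair_eq_of_finrank_span_eq_two [FiniteDimensional K V] {t : V} {p : Fin 2 → V}
    (h2 : Module.finrank K (span K {t, p 0, p 1}) = 2) {s : Fin 2}
    (hs : LinearIndependent K ![t, p s]) : span K {t, p s} = span K {t, p 0, p 1} := by
  refine eq_of_le_of_finrank_eq (span_mono ?_) ?_
  · fin_cases s <;> simp [Set.insert_subset_iff]
  · rw [h2, ← Matrix.range_cons_cons_empty t (p s) ![], finrank_span_eq_card hs,
      Fintype.card_fin]

theorem exists_rev_eq_smul_add_smul [LinearOrder K] [IsStrictOrderedRing K]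
    [FiniteDimensional K V] {t : V} {p : Fin 2 → V}
    (h2 : Module.finrank K (span K {t, p 0, p 1}) = 2) (ht : ∀ s, LinearIndependent K ![t, p s])
    (hp : LinearIndependent K ![p 0, p 1]) :
    ∃ s : Fin 2, ∃ a b : K, 1 ≤ |a| ∧ b ≠ 0 ∧ p s.rev = a • p s + b • t := by
  have hmem : p 1 ∈ span K {t, p 0} := by
    rw [span_pair_eq_of_finrank_span_eq_two h2 (ht 0)]
    exact subset_span (by simp)
  obtain ⟨β, α, h⟩ := mem_span_pair.1 hmem
  have hα : α ≠ 0 := by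
    rintro rfl
    simpa using LinearIndependent.pair_iff.1 (ht 1) β (-1) (by rw [← h]; simp)
  have hβ : β ≠ 0 := by
    rintro rfl
    simpa using LinearIndependent.pair_iff.1 hp α (-1) (by rw [← h]; simp)
  rcases le_or_gt 1 |α| with hα1 | hα1
  · refine ⟨0, α, β, hα1, hβ, ?_⟩
    show p 1 = α • p 0 + β • t
    rw [← h, add_comm]
  · refine ⟨1, α⁻¹, -(β / α), ?_, by simp [hα, hβ], ?_⟩
    · rw [abs_inv]
      exact (one_le_inv₀ (abs_pos.2 hα)).2 hα1.le
    · show p 0 = α⁻¹ • p 1 + -(β / α) • t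
      rw [← h]
      match_scalars
      · field_simp
      · field_simp; ring

theorem span_singleton_union_image_eq {ι : Type*} {t : V} {x y : ι → V}
    (h : ∀ k, span K {t, x k} = span K {t, y k}) (s : Set ι) :
    span K ({t} ∪ x '' s) = span K ({t} ∪ y '' s) := by
  have key (x y : ι → V) (h : ∀ k, span K {t, x k} = span K {t, y k}) :
      span K ({t} ∪ x '' s) ≤ span K ({t} ∪ y '' s) := by
    rw [span_le]
    rintro v (rfl | ⟨k, hk, rfl⟩)
    · exact subset_span (Or.inl rfl)
    · have hsub : ({t, y k} : Set V) ⊆ {t} ∪ y '' s :=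
        Set.pair_subset (Or.inl rfl) (Or.inr ⟨k, hk, rfl⟩)
      exact span_mono hsub (h k ▸ subset_span (by simp))
  exact le_antisymm (key x y h) (key y x fun k => (h k).symm)

theorem linearIndependent_update_of_finrank_span {r : ℕ} {t : V} {x : Fin r → V} {i : Fin r}
    (h : Module.finrank K (span K ({t} ∪ x '' {k | k ≠ i})) = r) :
    LinearIndependent K (update x i t) := by
  have hrange : Set.range (update x i t) = {t} ∪ x '' {k | k ≠ i} := by
    ext v
    simp only [Set.mem_range, Set.mem_union, Set.mem_singleton_iff, Set.mem_image]
    constructor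
    · rintro ⟨k, rfl⟩
      by_cases hk : k = i
      · subst hk; simp
      · exact Or.inr ⟨k, hk, (update_of_ne hk _ _).symm⟩
    · rintro (rfl | ⟨k, hk, rfl⟩)
      · exact ⟨i, update_self _ _ _⟩
      · exact ⟨k, update_of_ne hk _ _⟩
  rw [linearIndependent_iff_card_eq_finrank_span, Set.finrank, hrange, h, Fintype.card_fin]

end Vectors

theorem spike_rank_le_two_delta_general (Δ : ℤ) (hΔ : 1 ≤ Δ) (r : ℕ)
    (A : Matrix (Fin r) (Unit ⊕ Fin r × Fin 2) ℤ)
    (col : (Unit ⊕ Fin r × Fin 2) → (Fin r → ℚ))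
    (hcol : ∀ j i, col j i = (A i j : ℚ))
    -- `A` is `Δ`-modular of rank `r`
    (hmod : ∀ (f : Fin r → Fin r) (g : Fin r → (Unit ⊕ Fin r × Fin 2)),
      |(A.submatrix f g).det| ≤ Δ)
    -- the matroid is simple: columns are nonzero and pairwise non-parallel
    (hsimple : ∀ j k, j ≠ k → LinearIndependent ℚ ![col j, col k])
    -- each pair is parallel after contracting the tip
    (hpairs : ∀ i : Fin r,
      Module.finrank ℚ (span ℚ
        ({col (Sum.inl ()), col (Sum.inr (i, 0)), col (Sum.inr (i, 1))} : Set (Fin r → ℚ))) = 2)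
    -- the representatives form a circuit after contracting the tip
    (hcircuit : ∀ i : Fin r,
      Module.finrank ℚ (span ℚ
        ({col (Sum.inl ())} ∪ (fun k : Fin r => col (Sum.inr (k, 0))) '' {k | k ≠ i}
          : Set (Fin r → ℚ))) = r) :
    (r : ℤ) ≤ 2 * Δ := by
  obtain rfl | hr := Nat.eq_zero_or_pos r
  · omega
  have : NeZero r := ⟨hr.ne'⟩
  choose s a b ha hb hxy using fun i => exists_rev_eq_smul_add_smul
    (p := fun s => col (Sum.inr (i, s))) (hpairs i) (fun _ => hsimple _ _ Sum.inl_ne_inr)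
    (hsimple _ _ (by simp))
  have hspan (k : Fin r) : span ℚ {col (Sum.inl ()), col (Sum.inr (k, s k))} =
      span ℚ {col (Sum.inl ()), col (Sum.inr (k, 0))} := by
    have h (j : Fin 2) := span_pair_eq_of_finrank_span_eq_two
      (p := fun s => col (Sum.inr (k, s))) (hpairs k) (s := j) (hsimple _ _ Sum.inl_ne_inr)
    exact (h (s k)).trans (h 0).symm
  have hT (i : Fin r) : maxMinor col (update (fun k => Sum.inr (k, s k)) i (Sum.inl ())) ≠ 0 := by
    rw [maxMinor_ne_zero_iff, comp_update]
    apply linearIndependent_update_of_finrank_span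
    have h := hcircuit i
    rwa [← span_singleton_union_image_eq hspan] at h
  have hminor := maxMinor_eq_intCast_det col hcol
  have hcard := spike_rank_lt_two_mul_add_one col (iy := fun k => Sum.inr (k, (s k).rev)) hxy ha hb
    hT (Δ := (Δ : ℚ)) (fun g => by rw [hminor]; exact_mod_cast hmod id g)
    (fun g hg => by rw [hminor] at hg ⊢; exact_mod_cast Int.one_le_abs (by exact_mod_cast hg))
  have : (r : ℤ) < 2 * Δ + 1 := by exact_mod_cast hcard
  omega

/-- A rank-`r` spike represented by a `Δ`-modular integer matrix has `r ≤ 2Δ`.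

The spike has `2r + 1` columns: a tip (indexed by `Sum.inl ()`) and `r` pairs (indexed by
`Sum.inr (i, 0)` and `Sum.inr (i, 1)`).  The columns are nonzero and pairwise non-parallel
(the matroid is simple); after contracting the tip each pair becomes a parallel class of
size two, distinct pairs give distinct parallel classes, and the representatives form a
circuit (every `r − 1` of them together with the tip are linearly independent). -/
theorem spike_rank_le_two_delta (Δ : ℤ) (hΔ : 1 ≤ Δ) (r : ℕ)
    (A : Matrix (Fin r) (Unit ⊕ Fin r × Fin 2) ℤ)
    (col : (Unit ⊕ Fin r × Fin 2) → (Fin r → ℚ))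
    (hcol : ∀ j i, col j i = (A i j : ℚ))
    -- `A` is `Δ`-modular of rank `r`
    (hrank : A.rank = r)
    (hmod : ∀ (f : Fin r → Fin r) (g : Fin r → (Unit ⊕ Fin r × Fin 2)),
      |(A.submatrix f g).det| ≤ Δ)
    -- the matroid is simple: columns are nonzero and pairwise non-parallel
    (hsimple : ∀ j k, j ≠ k → LinearIndependent ℚ ![col j, col k])
    -- each pair is parallel after contracting the tip
    (hpairs : ∀ i : Fin r,
      Module.finrank ℚ (span ℚ
        ({col (Sum.inl ()), col (Sum.inr (i, 0)), col (Sum.inr (i, 1))} : Set (Fin r → ℚ))) = 2)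
    -- distinct pairs give distinct parallel classes of the contraction
    (hdistinct : ∀ i i' : Fin r, i ≠ i' →
      Module.finrank ℚ (span ℚ
        ({col (Sum.inl ()), col (Sum.inr (i, 0)), col (Sum.inr (i', 0))} : Set (Fin r → ℚ))) = 3)
    -- the representatives form a circuit after contracting the tip
    (hcircuit : ∀ i : Fin r,
      Module.finrank ℚ (span ℚ
        ({col (Sum.inl ())} ∪ (fun k : Fin r => col (Sum.inr (k, 0))) '' {k | k ≠ i}
          : Set (Fin r → ℚ))) = r) :
    (r : ℤ) ≤ 2 * Δ :=
  spike_rank_le_two_delta_general Δ hΔ r A col hcol hmod hsimple hpairs hcircuit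
end
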